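/- arXiv:2510.08103 — 4 statements merged into one kernel-verified Lean document; each statement's English description precedes it below -/
import Mathlib

section
/- Let i ∈ I and θ = (θ_i) ∈ ℝ^I with θ_i < 0, let V be a θ-stable point of P_{v,w}, and let V̄ be its reflected collection. Let Ū be a subrepresentation of V̄ that is contained in Ker B (i.e. it is killed by all maps B_j for j ≠ i and by all maps B̄_i). Define a collection U of subspaces of V by U_j^b := Ū_j^b for j ≠ i and U_i^b := Φ_i^{b−d_{ii}}( {0} ⊕ ⨁_{j≠i} ⨁_{ℓ∈L(i,j)} Ū_j^{b+(ℓ−1)d_{ii}} ). Then U is a subrepresentation of V contained in Ker B, and (s_i(θ), dim Ū) ≤ (θ, dim U) ≤ 0. In particular, every subrepresentation of V̄ contained in Ker B satisfies the first θ-stability inequality for the stability parameter s_i(θ). -/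
/- Common setup: (graded, generalized) quiver varieties attached to a symmetrized
Cartan matrix, following Neguț, "Extremal monomials of q-characters". -/

open Module LinearMap Finset

namespace QChar

variable {I : Type} [Fintype I] [DecidableEq I]

/-- The Cartan integer `c_{ij} = 2 d_{ij} / d_{ii}`. -/
def cc (d : I → I → ℤ) (i j : I) : ℤ := 2 * d i j / d i i

/-- `d_i = d_{ii} / 2`. -/
def dl (d : I → I → ℤ) (i : I) : ℤ := d i i / 2

/-- The number `−c_{ij}` (as a natural number), i.e. the cardinality of `L(i,j)`. -/
def cnat (d : I → I → ℤ) (i j : I) : ℕ := (-(cc d i j)).toNat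

/-- The assumptions on the symmetrized Cartan matrix `d = (d_{ij})`. -/
structure CartanData (d : I → I → ℤ) : Prop where
  symm : ∀ i j, d i j = d j i
  pos : ∀ i, 0 < d i i
  even : ∀ i, Even (d i i)
  offdiag : ∀ i j, i ≠ j → d i j ≤ 0
  dvd : ∀ i j, d i i ∣ 2 * d i j

/-- `ℓ`-fold composition of a linear endomap (the maps `x_{i,i}^{(ℓ),a}`). -/
def lpow {M : Type} [AddCommGroup M] [Module ℂ M] (f : M →ₗ[ℂ] M) : ℕ → M →ₗ[ℂ] M
  | 0 => LinearMap.id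
  | n + 1 => f ∘ₗ lpow f n

section Rep

variable (d : I → I → ℤ) (v w : I → ℤ → ℕ)
    (Vt : I → Type) [∀ i, AddCommGroup (Vt i)] [∀ i, Module ℂ (Vt i)]
    (Wt : I → Type) [∀ i, AddCommGroup (Wt i)] [∀ i, Module ℂ (Wt i)]
    (Vg : ∀ i : I, ℤ → Submodule ℂ (Vt i)) (Wg : ∀ i : I, ℤ → Submodule ℂ (Wt i))
    (x : ∀ j i : I, Vt i →ₗ[ℂ] Vt j) (A : ∀ i : I, Wt i →ₗ[ℂ] Vt i)
    (B : ∀ i : I, Vt i →ₗ[ℂ] Wt i)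

/-- A point of `P_{v,w}` : each total space `Vt i = ⊕_a V_i^a`, `Wt i = ⊕_a W_i^a` is the
internal direct sum of its graded pieces, `dim V_i^a = v_i^a`, `dim W_i^a = w_i^a`, the maps
`x_{j,i} : V_i^a → V_j^{a-d_{ij}}`, `A_i : W_i^a → V_i^{a+d_i}`, `B_i : V_i^{a-d_i} → W_i^a`
respect the gradings, and the relations (R1), (R2), (R3), (R4) hold. -/
def IsRep : Prop :=
  (∀ i, FiniteDimensional ℂ (Vt i)) ∧
  (∀ i, FiniteDimensional ℂ (Wt i)) ∧
  (∀ i, DirectSum.IsInternal (Vg i)) ∧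
  (∀ i, DirectSum.IsInternal (Wg i)) ∧
  (∀ i a, Module.finrank ℂ (Vg i a) = v i a) ∧
  (∀ i a, Module.finrank ℂ (Wg i a) = w i a) ∧
  (∀ j i a, (Vg i a).map (x j i) ≤ Vg j (a - d i j)) ∧
  (∀ i a, (Wg i a).map (A i) ≤ Vg i (a + dl d i)) ∧
  (∀ i a, (Vg i a).map (B i) ≤ Wg i (a + dl d i)) ∧
  (∀ i j, i ≠ j →
    lpow (x j j) (cnat d j i) ∘ₗ x j i + x j i ∘ₗ lpow (x i i) (cnat d i j) = 0) ∧
  (∀ i, (∑ j ∈ Finset.univ.erase i, ∑ ℓ ∈ Finset.range (cnat d i j),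
      lpow (x i i) (cnat d i j - 1 - ℓ) ∘ₗ x i j ∘ₗ x j i ∘ₗ lpow (x i i) ℓ)
      + A i ∘ₗ B i = 0) ∧
  (∀ i, x i i ∘ₗ A i = 0) ∧
  (∀ i, B i ∘ₗ x i i = 0)

/-- A subrepresentation: subspaces `U_i^a ⊆ V_i^a` preserved by all the maps `x`. -/
def IsSubrep (U : ∀ i : I, ℤ → Submodule ℂ (Vt i)) : Prop :=
  (∀ i a, U i a ≤ Vg i a) ∧ (∀ j i a, (U i a).map (x j i) ≤ U j (a - d i j))

/-- The pairing `(θ, u) = ∑_i d_i θ_i u_i`, where `u_i = ∑_a u_i^a`. -/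
noncomputable def pairθ (d : I → I → ℤ) (θ : I → ℝ) (u : I → ℤ → ℤ) : ℝ :=
  ∑ i : I, (dl d i : ℝ) * θ i * ∑ᶠ a : ℤ, (u i a : ℝ)

/-- The dimension vector of a collection of subspaces. -/
noncomputable def dimv (U : ∀ i : I, ℤ → Submodule ℂ (Vt i)) : I → ℤ → ℤ :=
  fun i a => (Module.finrank ℂ (U i a) : ℤ)

/-- `θ`-stability: subrepresentations contained in `Ker B` pair nonpositively with `θ`, and
subrepresentations containing `Im A` satisfy `(θ, v - dim U) ≥ 0`. -/
def IsStable (θ : I → ℝ) : Prop :=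
  (∀ U : ∀ i : I, ℤ → Submodule ℂ (Vt i), IsSubrep d Vt Vg x U →
    (∀ i a, (U i a).map (B i) = ⊥) → pairθ d θ (dimv Vt U) ≤ 0) ∧
  (∀ U : ∀ i : I, ℤ → Submodule ℂ (Vt i), IsSubrep d Vt Vg x U →
    (∀ i a, (Wg i a).map (A i) ≤ U i (a + dl d i)) →
    0 ≤ pairθ d θ (fun i a => (v i a : ℤ) - dimv Vt U i a))

/-- The map `Φ_i : D_i → V_i` (all `Φ_i^a` at once); the component of the domain indexed by
`(j, k)` (with `k + 1` running through `1, …, −c_{ij}`) is the summand `V_j^{a+ℓ d_{ii}}` of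
`D_i^a`, where `ℓ = c_{ij}/2 + (k+1) ∈ L(i,j)`. -/
noncomputable def Phi (i : I) :
    (Wt i × ((j : I) → Fin (cnat d i j) → Vt j)) →ₗ[ℂ] Vt i :=
  A i ∘ₗ LinearMap.fst ℂ (Wt i) ((j : I) → Fin (cnat d i j) → Vt j) +
  ∑ j : I, ∑ k : Fin (cnat d i j),
    lpow (x i i) (k : ℕ) ∘ₗ x i j ∘ₗ LinearMap.proj k ∘ₗ LinearMap.proj j ∘ₗ
      LinearMap.snd ℂ (Wt i) ((j' : I) → Fin (cnat d i j') → Vt j')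

/-- The graded piece `D_i^a = W_i^{a+d_i} ⊕ ⨁_{j≠i} ⨁_{ℓ∈L(i,j)} V_j^{a+ℓd_{ii}}` of the
domain of `Φ_i`. -/
def Dg (i : I) (a : ℤ) :
    Submodule ℂ (Wt i × ((j : I) → Fin (cnat d i j) → Vt j)) :=
  (Wg i (a + dl d i)).prod
    (Submodule.pi Set.univ fun j => Submodule.pi Set.univ fun k : Fin (cnat d i j) =>
      Vg j (a + d i j + ((k : ℤ) + 1) * d i i))

/-- The map `Ψ_i : V_i → D_i` (all `Ψ_i^a` at once). -/
noncomputable def Psi (i : I) :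
    Vt i →ₗ[ℂ] (Wt i × ((j : I) → Fin (cnat d i j) → Vt j)) :=
  LinearMap.prod (B i)
    (LinearMap.pi fun j => LinearMap.pi fun k : Fin (cnat d i j) =>
      x j i ∘ₗ lpow (x i i) (cnat d i j - 1 - (k : ℕ)))

/-- The map `Υ_i : D_i → D_i` (all `Υ_i^a : D_i^a → D_i^{a - d_{ii}}` at once). -/
noncomputable def Ups (i : I) :
    (Wt i × ((j : I) → Fin (cnat d i j) → Vt j)) →ₗ[ℂ]
      (Wt i × ((j : I) → Fin (cnat d i j) → Vt j)) :=
  LinearMap.prod 0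
    (LinearMap.pi fun j => LinearMap.pi fun k : Fin (cnat d i j) =>
      if (k : ℕ) = 0 then
        -(lpow (x j j) (cnat d j i) ∘ₗ
          LinearMap.proj (⟨cnat d i j - 1, Nat.sub_lt k.pos Nat.one_pos⟩ : Fin (cnat d i j)) ∘ₗ
          LinearMap.proj j ∘ₗ
          LinearMap.snd ℂ (Wt i) ((j' : I) → Fin (cnat d i j') → Vt j'))
      else
        LinearMap.proj (⟨(k : ℕ) - 1, lt_of_le_of_lt (Nat.sub_le _ _) k.isLt⟩ :
            Fin (cnat d i j)) ∘ₗ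
          LinearMap.proj j ∘ₗ
          LinearMap.snd ℂ (Wt i) ((j' : I) → Fin (cnat d i j') → Vt j'))

/-- The (ambient representative of the) map `x̄_{j,i} : V̄_i^a → V_j^{a-d_{ij}}`, i.e. the
projection of `D_i^a` onto its summand `V_j^{a-d_{ij}}` (the one with `ℓ = -c_{ij}/2`). -/
noncomputable def prj (i j : I) :
    (Wt i × ((j' : I) → Fin (cnat d i j') → Vt j')) →ₗ[ℂ] Vt j :=
  if h : 0 < cnat d i j then
    LinearMap.proj (⟨cnat d i j - 1, Nat.sub_lt h Nat.one_pos⟩ : Fin (cnat d i j)) ∘ₗ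
      LinearMap.proj j ∘ₗ LinearMap.snd ℂ (Wt i) ((j' : I) → Fin (cnat d i j') → Vt j')
  else 0

/-- The operation `S_i` on dimension vectors (depending on `w`), cf. the braid group action
on monomials. -/
def SS (d : I → I → ℤ) (w : I → ℤ → ℕ) (i : I) (u : I → ℤ → ℤ) : I → ℤ → ℤ := fun j a =>
  if j = i then
    (w i (a + dl d i) : ℤ) +
      (∑ j' ∈ Finset.univ.erase i, ∑ k ∈ Finset.range (cnat d i j'),
        u j' (a + d i j' + ((k : ℤ) + 1) * d i i)) -
      u i (a + d i i)
  else u j a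

/-- The simple reflection `s_i` on stability parameters. -/
def sref (d : I → I → ℤ) (i : I) (θ : I → ℝ) : I → ℝ := fun j => θ j - (cc d j i : ℝ) * θ i

/-- A subrepresentation `Ū` of the reflected collection `V̄`, described in ambient terms:
`Ū_j^a = Uo j a ⊆ V_j^a` for `j ≠ i`, while `Ū_i^a = Ui a ⊆ Ker Φ_i^a = D_i^a ⊓ Ker Φ_i`. -/
def BarSubrep (i : I) (Uo : ∀ j : I, ℤ → Submodule ℂ (Vt j))
    (Ui : ℤ → Submodule ℂ (Wt i × ((j : I) → Fin (cnat d i j) → Vt j))) : Prop :=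
  (∀ a, Ui a ≤ Dg d Vt Wt Vg Wg i a ⊓ LinearMap.ker (Phi d Vt Wt x A i)) ∧
  (∀ j, j ≠ i → ∀ a, Uo j a ≤ Vg j a) ∧
  (∀ j j', j ≠ i → j' ≠ i → ∀ a, (Uo j' a).map (x j j') ≤ Uo j (a - d j' j)) ∧
  (∀ j, j ≠ i → ∀ a, (Ui a).map (prj d Vt Wt i j) ≤ Uo j (a - d i j)) ∧
  (∀ j, j ≠ i → ∀ a,
    (Uo j (a + d i j)).map (Psi d Vt Wt x B i ∘ₗ x i j) ≤ Ui a) ∧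
  (∀ a, (Ui a).map (Ups d Vt Wt x i) ≤ Ui (a - d i i))

/-- The dimension vector of a subrepresentation of the reflected collection. -/
noncomputable def dimbar (i : I) (Uo : ∀ j : I, ℤ → Submodule ℂ (Vt j))
    (Ui : ℤ → Submodule ℂ (Wt i × ((j : I) → Fin (cnat d i j) → Vt j))) : I → ℤ → ℤ :=
  fun j a => if j = i then (Module.finrank ℂ (Ui a) : ℤ)
    else (Module.finrank ℂ (Uo j a) : ℤ)

/-- The reflected collection `V̄` (with `V̄_i^a = Ker Φ_i^a`, all other data as described) is a
point of `P_{v̄,w}`: the grading of `Ker Φ_i` is an internal direct sum, the reflected maps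
respect the gradings, and the relations (R1)-(R4) hold for the reflected maps. -/
def BarPoint (i : I) : Prop :=
  FiniteDimensional ℂ (LinearMap.ker (Phi d Vt Wt x A i)) ∧
  DirectSum.IsInternal (fun a : ℤ =>
    (Dg d Vt Wt Vg Wg i a).comap (LinearMap.ker (Phi d Vt Wt x A i)).subtype) ∧
  (∀ j, j ≠ i → ∀ a,
    ((Dg d Vt Wt Vg Wg i a ⊓ LinearMap.ker (Phi d Vt Wt x A i)).map (prj d Vt Wt i j))
      ≤ Vg j (a - d i j)) ∧
  (∀ j, j ≠ i → ∀ a,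
    (Vg j (a + d i j)).map (Psi d Vt Wt x B i ∘ₗ x i j)
      ≤ Dg d Vt Wt Vg Wg i a ⊓ LinearMap.ker (Phi d Vt Wt x A i)) ∧
  (∀ a, ((Dg d Vt Wt Vg Wg i a ⊓ LinearMap.ker (Phi d Vt Wt x A i)).map (Ups d Vt Wt x i))
      ≤ Dg d Vt Wt Vg Wg i (a - d i i) ⊓ LinearMap.ker (Phi d Vt Wt x A i)) ∧
  (∀ a, ((Wg i a).map (Psi d Vt Wt x B i ∘ₗ A i))
      ≤ Dg d Vt Wt Vg Wg i (a + dl d i) ⊓ LinearMap.ker (Phi d Vt Wt x A i)) ∧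
  (∀ a, ((Dg d Vt Wt Vg Wg i a ⊓ LinearMap.ker (Phi d Vt Wt x A i)).map
      (LinearMap.fst ℂ (Wt i) ((j : I) → Fin (cnat d i j) → Vt j)))
      ≤ Wg i (a + dl d i)) ∧
  -- (R1), case of the pair (j, i) with j ≠ i
  (∀ j, j ≠ i → ∀ u ∈ LinearMap.ker (Phi d Vt Wt x A i),
    lpow (x j j) (cnat d j i) (prj d Vt Wt i j u) +
      prj d Vt Wt i j (lpow (Ups d Vt Wt x i) (cnat d i j) u) = 0) ∧
  -- (R1), case of the pair (i, j) with j ≠ i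
  (∀ j, j ≠ i →
    lpow (Ups d Vt Wt x i) (cnat d i j) ∘ₗ (Psi d Vt Wt x B i ∘ₗ x i j) +
      (Psi d Vt Wt x B i ∘ₗ x i j) ∘ₗ lpow (x j j) (cnat d j i) = 0) ∧
  -- (R1), case of a pair (j, j') not involving i
  (∀ j j', j ≠ i → j' ≠ i → j ≠ j' →
    lpow (x j j) (cnat d j j') ∘ₗ x j j' + x j j' ∘ₗ lpow (x j' j') (cnat d j' j) = 0) ∧
  -- (R2) at the vertex i
  (∀ u ∈ LinearMap.ker (Phi d Vt Wt x A i),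
    (∑ j ∈ Finset.univ.erase i, ∑ ℓ ∈ Finset.range (cnat d i j),
      lpow (Ups d Vt Wt x i) (cnat d i j - 1 - ℓ)
        ((Psi d Vt Wt x B i ∘ₗ x i j)
          (prj d Vt Wt i j (lpow (Ups d Vt Wt x i) ℓ u)))) +
      Psi d Vt Wt x B i
        (A i ((LinearMap.fst ℂ (Wt i) ((j : I) → Fin (cnat d i j) → Vt j)) u)) = 0) ∧
  -- (R2) at a vertex j ≠ i
  (∀ j, j ≠ i →
    (∑ j' ∈ Finset.univ.erase j, ∑ ℓ ∈ Finset.range (cnat d j j'),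
      (if j' = i then
        lpow (x j j) (cnat d j j' - 1 - ℓ) ∘ₗ prj d Vt Wt i j ∘ₗ
          Psi d Vt Wt x B i ∘ₗ x i j ∘ₗ lpow (x j j) ℓ
      else
        lpow (x j j) (cnat d j j' - 1 - ℓ) ∘ₗ x j j' ∘ₗ x j' j ∘ₗ lpow (x j j) ℓ)) +
      A j ∘ₗ B j = 0) ∧
  -- (R3) at the vertex i
  (Ups d Vt Wt x i ∘ₗ (Psi d Vt Wt x B i ∘ₗ A i) = 0) ∧
  -- (R3) at a vertex j ≠ i
  (∀ j, j ≠ i → x j j ∘ₗ A j = 0) ∧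
  -- (R4) at the vertex i
  (∀ u ∈ LinearMap.ker (Phi d Vt Wt x A i),
    (LinearMap.fst ℂ (Wt i) ((j : I) → Fin (cnat d i j) → Vt j)) (Ups d Vt Wt x i u) = 0) ∧
  -- (R4) at a vertex j ≠ i
  (∀ j, j ≠ i → B j ∘ₗ x j j = 0)

/-- `θ'`-stability of the reflected collection, in ambient terms. -/
def BarStable (i : I) (θ' : I → ℝ) : Prop :=
  (∀ (Uo : ∀ j : I, ℤ → Submodule ℂ (Vt j))
      (Ui : ℤ → Submodule ℂ (Wt i × ((j : I) → Fin (cnat d i j) → Vt j))),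
    BarSubrep d Vt Wt Vg Wg x A B i Uo Ui →
    (∀ j, j ≠ i → ∀ a, (Uo j a).map (B j) = ⊥) →
    (∀ a, (Ui a).map (LinearMap.fst ℂ (Wt i) ((j : I) → Fin (cnat d i j) → Vt j)) = ⊥) →
    pairθ d θ' (dimbar d Vt Wt i Uo Ui) ≤ 0) ∧
  (∀ (Uo : ∀ j : I, ℤ → Submodule ℂ (Vt j))
      (Ui : ℤ → Submodule ℂ (Wt i × ((j : I) → Fin (cnat d i j) → Vt j))),
    BarSubrep d Vt Wt Vg Wg x A B i Uo Ui →
    (∀ j, j ≠ i → ∀ a, (Wg j a).map (A j) ≤ Uo j (a + dl d j)) →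
    (∀ a, (Wg i a).map (Psi d Vt Wt x B i ∘ₗ A i) ≤ Ui (a + dl d i)) →
    0 ≤ pairθ d θ'
      (fun j a => SS d w i (fun j' b => (v j' b : ℤ)) j a - dimbar d Vt Wt i Uo Ui j a))

end Rep

end QChar
namespace QCharAux
open QChar Module LinearMap

variable {I : Type} [Fintype I] [DecidableEq I]

theorem lpow_comm_apply {M : Type} [AddCommGroup M] [Module ℂ M] (f : M →ₗ[ℂ] M) (n : ℕ)
    (u : M) : f (lpow f n u) = lpow f n (f u) := by
  induction n with
  | zero => rfl
  | succ n ih => exact congrArg f ih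

theorem lpow_apply_succ' {M : Type} [AddCommGroup M] [Module ℂ M] (f : M →ₗ[ℂ] M) (n : ℕ)
    (u : M) : lpow f n (f u) = lpow f (n + 1) u :=
  (lpow_comm_apply f n u).symm

theorem lpow_mem {M : Type} [AddCommGroup M] [Module ℂ M] (f : M →ₗ[ℂ] M)
    (p : ℤ → Submodule ℂ M) (t : ℤ)
    (h : ∀ a u, u ∈ p a → f u ∈ p (a - t)) (k : ℕ) (a : ℤ) (u : M) (hu : u ∈ p a) :
    lpow f k u ∈ p (a - (k : ℤ) * t) := by
  induction k with
  | zero => simpa [lpow] using hu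
  | succ k ih =>
    have h2 := h _ _ ih
    have e : a - (k : ℤ) * t - t = a - ((k : ℕ) + 1 : ℤ) * t := by ring
    rw [e] at h2
    exact h2

variable {d : I → I → ℤ}

theorem hd_mul (hd : CartanData d) (i j : I) : d i i * cc d i j = 2 * d i j :=
  Int.mul_ediv_cancel' (hd.dvd i j)

theorem cc_diag (hd : CartanData d) (i : I) : cc d i i = 2 :=
  Int.mul_ediv_cancel 2 (hd.pos i).ne'

theorem cnat_diag (hd : CartanData d) (i : I) : cnat d i i = 0 := by
  rw [cnat, cc_diag hd]; rfl

theorem cc_nonpos (hd : CartanData d) {i j : I} (h : i ≠ j) : cc d i j ≤ 0 := by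
  nlinarith [hd.pos i, hd.offdiag i j h, hd_mul hd i j]

theorem cnat_cast (hd : CartanData d) {i j : I} (h : i ≠ j) :
    (cnat d i j : ℤ) = - cc d i j :=
  Int.toNat_of_nonneg (by linarith [cc_nonpos hd h])

theorem cnat_mul (hd : CartanData d) {i j : I} (h : i ≠ j) :
    (cnat d i j : ℤ) * d i i = -(2 * d i j) := by
  rw [cnat_cast hd h]
  linear_combination - hd_mul hd i j

theorem dl_two (hd : CartanData d) (i : I) : 2 * dl d i = d i i := by
  obtain ⟨m, hm⟩ := hd.even i
  unfold dl
  omega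

theorem dl_pos (hd : CartanData d) (i : I) : 0 < dl d i := by
  have := dl_two hd i; have := hd.pos i; omega

theorem dl_cc (hd : CartanData d) (i j : I) : dl d i * cc d i j = d i j := by
  have h1 := hd_mul hd i j
  have h2 := dl_two hd i
  have h3 : (2 : ℤ) * (dl d i * cc d i j) = 2 * d i j := by
    rw [← h1, ← h2]; ring
  exact mul_left_cancel₀ two_ne_zero h3

theorem map_eq_zero_of_self_add_self {M N : Type} [AddCommGroup M] [Module ℂ M]
    [AddCommGroup N] [Module ℂ N] {f : M →ₗ[ℂ] N} (h : f + f = 0) : f = 0 := by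
  have h2 : (2 : ℂ) • f = 0 := by rw [two_smul]; exact h
  simpa [smul_eq_zero] using h2

theorem finrank_map_add_finrank_inf_ker {M N : Type} [AddCommGroup M] [Module ℂ M]
    [AddCommGroup N] [Module ℂ N] [FiniteDimensional ℂ M] (f : M →ₗ[ℂ] N)
    (p : Submodule ℂ M) :
    finrank ℂ (p.map f) + finrank ℂ ↥(p ⊓ LinearMap.ker f) = finrank ℂ p := by
  have h1 := LinearMap.finrank_range_add_finrank_ker (f.domRestrict p)
  rw [LinearMap.range_domRestrict] at h1
  have h2 : LinearMap.ker (f.domRestrict p) = (LinearMap.ker f).comap p.subtype := by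
    ext y
    simp [LinearMap.mem_ker, LinearMap.domRestrict_apply]
  rw [h2] at h1
  have h3 : finrank ℂ ((LinearMap.ker f).comap p.subtype) =
      finrank ℂ ↥(p ⊓ LinearMap.ker f) := by
    conv_rhs => rw [← Submodule.map_comap_subtype]
    exact LinearEquiv.finrank_eq
      (Submodule.equivMapOfInjective p.subtype (Submodule.injective_subtype p) _)
  rw [h3] at h1
  exact h1

theorem finrank_submodule_prod {M N : Type} [AddCommGroup M] [Module ℂ M]
    [AddCommGroup N] [Module ℂ N] [FiniteDimensional ℂ M] [FiniteDimensional ℂ N]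
    (p : Submodule ℂ M) (q : Submodule ℂ N) :
    finrank ℂ ↥(p.prod q) = finrank ℂ p + finrank ℂ q := by
  have e : ↥(p.prod q) ≃ₗ[ℂ] (↥p × ↥q) :=
    { toFun := fun z => (⟨z.1.1, z.2.1⟩, ⟨z.1.2, z.2.2⟩)
      map_add' := fun a b => rfl
      map_smul' := fun c a => rfl
      invFun := fun z => ⟨(z.1.1, z.2.1), ⟨z.1.2, z.2.2⟩⟩
      left_inv := fun a => rfl
      right_inv := fun z => rfl }
  rw [e.finrank_eq, Module.finrank_prod]

theorem finrank_submodule_pi {η : Type} [Fintype η] (M : η → Type)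
    [∀ j, AddCommGroup (M j)] [∀ j, Module ℂ (M j)] [∀ j, FiniteDimensional ℂ (M j)]
    (p : ∀ j, Submodule ℂ (M j)) :
    finrank ℂ ↥(Submodule.pi Set.univ p) = ∑ j, finrank ℂ (p j) := by
  have e : ↥(Submodule.pi Set.univ p) ≃ₗ[ℂ] (∀ j, ↥(p j)) :=
    { toFun := fun z j => ⟨z.1 j, z.2 j (Set.mem_univ j)⟩
      map_add' := fun a b => rfl
      map_smul' := fun c a => rfl
      invFun := fun f => ⟨fun j => (f j).1, fun j _ => (f j).2⟩
      left_inv := fun a => rfl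
      right_inv := fun f => rfl }
  rw [e.finrank_eq, Module.finrank_pi_fintype]

end QCharAux
namespace QCharAux
open QChar Module LinearMap

section Comp
variable {I : Type} [Fintype I] [DecidableEq I]
variable (d : I → I → ℤ)
    (Vt : I → Type) [∀ i, AddCommGroup (Vt i)] [∀ i, Module ℂ (Vt i)]
    (Wt : I → Type) [∀ i, AddCommGroup (Wt i)] [∀ i, Module ℂ (Wt i)]
    (x : ∀ j i : I, Vt i →ₗ[ℂ] Vt j) (A : ∀ i : I, Wt i →ₗ[ℂ] Vt i)
    (B : ∀ i : I, Vt i →ₗ[ℂ] Wt i) (i : I)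

theorem Psi_fst (u : Vt i) : (Psi d Vt Wt x B i u).1 = B i u := rfl

theorem Psi_snd (u : Vt i) (j : I) (k : Fin (cnat d i j)) :
    (Psi d Vt Wt x B i u).2 j k = x j i (lpow (x i i) (cnat d i j - 1 - (k : ℕ)) u) := rfl

theorem Phi_apply (ξ : Wt i × ((j : I) → Fin (cnat d i j) → Vt j)) :
    Phi d Vt Wt x A i ξ =
      A i ξ.1 + ∑ j : I, ∑ k : Fin (cnat d i j), lpow (x i i) (k : ℕ) (x i j (ξ.2 j k)) := by
  simp [Phi, LinearMap.sum_apply]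

theorem Ups_fst (ξ : Wt i × ((j : I) → Fin (cnat d i j) → Vt j)) :
    (Ups d Vt Wt x i ξ).1 = 0 := rfl

theorem Ups_snd_zero (ξ : Wt i × ((j : I) → Fin (cnat d i j) → Vt j)) (j : I)
    (k : Fin (cnat d i j)) (hk : (k : ℕ) = 0) :
    (Ups d Vt Wt x i ξ).2 j k =
      - lpow (x j j) (cnat d j i) (ξ.2 j ⟨cnat d i j - 1, Nat.sub_lt k.pos Nat.one_pos⟩) := by
  rw [Ups]
  simp only [LinearMap.prod_apply, Function.prod, LinearMap.pi_apply]
  rw [if_pos hk]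
  rfl

theorem Ups_snd_ne (ξ : Wt i × ((j : I) → Fin (cnat d i j) → Vt j)) (j : I)
    (k : Fin (cnat d i j)) (hk : (k : ℕ) ≠ 0) :
    (Ups d Vt Wt x i ξ).2 j k =
      ξ.2 j ⟨(k : ℕ) - 1, lt_of_le_of_lt (Nat.sub_le _ _) k.isLt⟩ := by
  rw [Ups]
  simp only [LinearMap.prod_apply, Function.prod, LinearMap.pi_apply]
  rw [if_neg hk]
  rfl

theorem prj_apply (j : I) (h : 0 < cnat d i j) (ξ : Wt i × ((j : I) → Fin (cnat d i j) → Vt j)) :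
    prj d Vt Wt i j ξ = ξ.2 j ⟨cnat d i j - 1, Nat.sub_lt h Nat.one_pos⟩ := by
  rw [prj, dif_pos h]
  rfl

theorem prj_zero_of (j : I) (h : ¬ 0 < cnat d i j) : prj d Vt Wt i j = 0 := by
  rw [prj, dif_neg h]

/-- Generator of the domain of `Φ_i` concentrated in component `(j,k)`. -/
def gen (j : I) (k : Fin (cnat d i j)) (u : Vt j) :
    Wt i × ((j' : I) → Fin (cnat d i j') → Vt j') :=
  (0, Pi.single j (Pi.single k u))

theorem gen_snd (j : I) (k : Fin (cnat d i j)) (u : Vt j) :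
    (gen d Vt Wt i j k u).2 = Pi.single j (Pi.single k u) := rfl

theorem Phi_gen (j : I) (k : Fin (cnat d i j)) (u : Vt j) :
    Phi d Vt Wt x A i (gen d Vt Wt i j k u) = lpow (x i i) (k : ℕ) (x i j u) := by
  rw [Phi_apply]
  simp only [gen, map_zero, zero_add]
  rw [Finset.sum_eq_single j]
  · rw [Finset.sum_eq_single k]
    · rw [Pi.single_eq_same, Pi.single_eq_same]
    · intro k' _ hk'
      rw [Pi.single_eq_same, Pi.single_eq_of_ne hk']
      simp
    · simp
  · intro j' _ hj'
    rw [Pi.single_eq_of_ne hj']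
    simp
  · simp

theorem gen_decomp (ξ : Wt i × ((j : I) → Fin (cnat d i j) → Vt j)) (hξ : ξ.1 = 0) :
    ξ = ∑ j : I, ∑ k : Fin (cnat d i j), gen d Vt Wt i j k (ξ.2 j k) := by
  refine Prod.ext ?_ ?_
  · rw [hξ]
    rw [Prod.fst_sum]
    simp [gen, Prod.fst_sum]
  · funext j' k'
    rw [Prod.snd_sum]
    rw [Finset.sum_apply, Finset.sum_apply]
    rw [Finset.sum_eq_single j']
    · rw [Prod.snd_sum, Finset.sum_apply, Finset.sum_apply, Finset.sum_eq_single k']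
      · simp [gen]
      · intro k'' _ hk''
        simp [gen, Pi.single_eq_same, Pi.single_eq_of_ne hk''.symm]
      · simp
    · intro j'' _ hj''
      rw [Prod.snd_sum, Finset.sum_apply, Finset.sum_apply]
      apply Finset.sum_eq_zero
      intro k'' _
      show (gen d Vt Wt i j'' k'' (ξ.2 j'' k'')).2 j' k' = 0
      rw [gen_snd, Pi.single_eq_of_ne (Ne.symm hj'')]
      rfl
    · simp

variable (Uo : ∀ j : I, ℤ → Submodule ℂ (Vt j))

/-- The graded piece of the submodule whose image under `Φ_i` is `U_i`. -/
def Emod (b : ℤ) : Submodule ℂ (Wt i × ((j : I) → Fin (cnat d i j) → Vt j)) :=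
  (⊥ : Submodule ℂ (Wt i)).prod
    (Submodule.pi Set.univ fun j => Submodule.pi Set.univ
      fun k : Fin (cnat d i j) =>
        Uo j ((b - d i i) + d i j + ((k : ℤ) + 1) * d i i))

theorem mem_Emod (b : ℤ) (ξ : Wt i × ((j : I) → Fin (cnat d i j) → Vt j)) :
    ξ ∈ Emod d Vt Wt i Uo b ↔ ξ.1 = 0 ∧ ∀ (j : I) (k : Fin (cnat d i j)),
      ξ.2 j k ∈ Uo j ((b - d i i) + d i j + ((k : ℤ) + 1) * d i i) := by
  simp [Emod, Submodule.mem_prod, Submodule.mem_pi]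

theorem gen_mem_Emod (b : ℤ) (j : I) (k : Fin (cnat d i j)) (u : Vt j)
    (hu : u ∈ Uo j ((b - d i i) + d i j + ((k : ℤ) + 1) * d i i)) :
    gen d Vt Wt i j k u ∈ Emod d Vt Wt i Uo b := by
  rw [mem_Emod]
  refine ⟨rfl, fun j' k' => ?_⟩
  rw [gen_snd]
  rcases eq_or_ne j' j with rfl | hj'
  · rw [Pi.single_eq_same]
    rcases eq_or_ne k' k with rfl | hk'
    · rw [Pi.single_eq_same]; exact hu
    · rw [Pi.single_eq_of_ne hk']; exact Submodule.zero_mem _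
  · rw [Pi.single_eq_of_ne hj']
    exact Submodule.zero_mem _

end Comp
end QCharAux
namespace QCharAux
open QChar Module LinearMap

variable {I : Type} [Fintype I] [DecidableEq I]
variable {Vt : I → Type} [∀ i, AddCommGroup (Vt i)] [∀ i, Module ℂ (Vt i)]
variable {Wt : I → Type} [∀ i, AddCommGroup (Wt i)] [∀ i, Module ℂ (Wt i)]

theorem ne_of_fin {d : I → I → ℤ} (hd : CartanData d) {i j : I}
    (k : Fin (cnat d i j)) : j ≠ i := by
  intro h
  have h0 := cnat_diag hd i
  have h1 := k.isLt
  subst h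
  omega

section R1
variable {d : I → I → ℤ} {x : ∀ j i : I, Vt i →ₗ[ℂ] Vt j} {i : I}

theorem r1_ij (hR1 : ∀ i' j', i' ≠ j' →
      lpow (x j' j') (cnat d j' i') ∘ₗ x j' i' + x j' i' ∘ₗ lpow (x i' i') (cnat d i' j') = 0)
    {j : I} (hj : j ≠ i) (u : Vt j) :
    lpow (x i i) (cnat d i j) (x i j u) = - x i j (lpow (x j j) (cnat d j i) u) := by
  have h := LinearMap.congr_fun (hR1 j i hj) u
  simp only [LinearMap.add_apply, LinearMap.comp_apply, LinearMap.zero_apply] at h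
  exact eq_neg_of_add_eq_zero_left h

theorem r1_ji (hR1 : ∀ i' j', i' ≠ j' →
      lpow (x j' j') (cnat d j' i') ∘ₗ x j' i' + x j' i' ∘ₗ lpow (x i' i') (cnat d i' j') = 0)
    {j : I} (hj : j ≠ i) (v : Vt i) :
    lpow (x j j) (cnat d j i) (x j i v) = - x j i (lpow (x i i) (cnat d i j) v) := by
  have h := LinearMap.congr_fun (hR1 i j (Ne.symm hj)) v
  simp only [LinearMap.add_apply, LinearMap.comp_apply, LinearMap.zero_apply] at h
  exact eq_neg_of_add_eq_zero_left h

theorem cnat_symm_zero (hd : CartanData d) {j : I} (hj : j ≠ i) (hc : cnat d i j = 0) :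
    cnat d j i = 0 := by
  have hcc : cc d i j = 0 := by
    have h1 := cc_nonpos hd (Ne.symm hj)
    have h2 : (cnat d i j : ℤ) = 0 := by rw [hc]; rfl
    rw [cnat_cast hd (Ne.symm hj)] at h2
    omega
  have hdij : d i j = 0 := by
    have h3 := hd_mul hd i j
    rw [hcc, mul_zero] at h3
    omega
  have hdji : d j i = 0 := by rw [← hd.symm i j]; exact hdij
  unfold cnat cc
  rw [hdji, mul_zero, Int.zero_ediv, neg_zero]
  rfl

theorem x_ij_eq_zero (hR1 : ∀ i' j', i' ≠ j' →
      lpow (x j' j') (cnat d j' i') ∘ₗ x j' i' + x j' i' ∘ₗ lpow (x i' i') (cnat d i' j') = 0)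
    (hd : CartanData d) {j : I} (hj : j ≠ i) (hc : cnat d i j = 0) :
    x i j = 0 := by
  have hc' := cnat_symm_zero (i := i) hd hj hc
  have h := hR1 j i hj
  rw [hc, hc'] at h
  simp only [lpow, LinearMap.id_comp, LinearMap.comp_id] at h
  exact map_eq_zero_of_self_add_self h

theorem x_ji_eq_zero (hR1 : ∀ i' j', i' ≠ j' →
      lpow (x j' j') (cnat d j' i') ∘ₗ x j' i' + x j' i' ∘ₗ lpow (x i' i') (cnat d i' j') = 0)
    (hd : CartanData d) {j : I} (hj : j ≠ i) (hc : cnat d i j = 0) :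
    x j i = 0 := by
  have hc' := cnat_symm_zero (i := i) hd hj hc
  have h := hR1 i j (Ne.symm hj)
  rw [hc, hc'] at h
  simp only [lpow, LinearMap.id_comp, LinearMap.comp_id] at h
  exact map_eq_zero_of_self_add_self h

end R1

section L1
variable {d : I → I → ℤ} {x : ∀ j i : I, Vt i →ₗ[ℂ] Vt j}
variable {B : ∀ i : I, Vt i →ₗ[ℂ] Wt i} {i : I}

theorem ups_psi (hd : CartanData d)
    (hR1 : ∀ i' j', i' ≠ j' →
      lpow (x j' j') (cnat d j' i') ∘ₗ x j' i' + x j' i' ∘ₗ lpow (x i' i') (cnat d i' j') = 0)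
    (hR4 : B i ∘ₗ x i i = 0) (v : Vt i) :
    Ups d Vt Wt x i (Psi d Vt Wt x B i v) = Psi d Vt Wt x B i (x i i v) := by
  refine Prod.ext ?_ ?_
  · rw [Ups_fst, Psi_fst]
    exact (LinearMap.congr_fun hR4 v).symm
  · funext j k
    have hj : j ≠ i := ne_of_fin hd k
    have hklt := k.isLt
    by_cases hk : (k : ℕ) = 0
    · rw [Ups_snd_zero d Vt Wt x i _ j k hk, Psi_snd, Psi_snd, hk]
      have e1 : cnat d i j - 1 -
          ((⟨cnat d i j - 1, Nat.sub_lt k.pos Nat.one_pos⟩ : Fin (cnat d i j)) : ℕ) = 0 :=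
        Nat.sub_self _
      have e2 : cnat d i j - 1 + 1 = cnat d i j := Nat.succ_pred_eq_of_pos k.pos
      rw [e1, Nat.sub_zero, lpow_apply_succ', e2,
        show (lpow (x i i) 0) v = v from rfl, r1_ji hR1 hj v, neg_neg]
    · rw [Ups_snd_ne d Vt Wt x i _ j k hk, Psi_snd, Psi_snd, lpow_apply_succ']
      have e : cnat d i j - 1 -
          ((⟨(k : ℕ) - 1, lt_of_le_of_lt (Nat.sub_le _ _) k.isLt⟩ : Fin (cnat d i j)) : ℕ) =
          cnat d i j - 1 - (k : ℕ) + 1 := by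
        show cnat d i j - 1 - ((k : ℕ) - 1) = _
        omega
      rw [e]

theorem psi_lpow (hd : CartanData d)
    (hR1 : ∀ i' j', i' ≠ j' →
      lpow (x j' j') (cnat d j' i') ∘ₗ x j' i' + x j' i' ∘ₗ lpow (x i' i') (cnat d i' j') = 0)
    (hR4 : B i ∘ₗ x i i = 0) (k : ℕ) (v : Vt i) :
    Psi d Vt Wt x B i (lpow (x i i) k v) = lpow (Ups d Vt Wt x i) k (Psi d Vt Wt x B i v) := by
  induction k with
  | zero => rfl
  | succ k ih =>
    show Psi d Vt Wt x B i (x i i (lpow (x i i) k v)) =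
      Ups d Vt Wt x i (lpow (Ups d Vt Wt x i) k (Psi d Vt Wt x B i v))
    rw [← ih, ups_psi hd hR1 hR4]

theorem prj_psi {j : I} (h : 0 < cnat d i j) (v : Vt i) :
    prj d Vt Wt i j (Psi d Vt Wt x B i v) = x j i v := by
  rw [prj_apply d Vt Wt i j h, Psi_snd]
  have e : cnat d i j - 1 -
      ((⟨cnat d i j - 1, Nat.sub_lt h Nat.one_pos⟩ : Fin (cnat d i j)) : ℕ) = 0 :=
    Nat.sub_self _
  rw [e]
  rfl

theorem prj_lpow_ups {j : I} (m : ℕ) (hm : m < cnat d i j)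
    (ξ : Wt i × ((j' : I) → Fin (cnat d i j') → Vt j')) :
    prj d Vt Wt i j (lpow (Ups d Vt Wt x i) m ξ) =
      ξ.2 j ⟨cnat d i j - 1 - m, by omega⟩ := by
  induction m generalizing ξ with
  | zero =>
    rw [show lpow (Ups d Vt Wt x i) 0 ξ = ξ from rfl, prj_apply d Vt Wt i j (by omega)]
    rfl
  | succ m ih =>
    have h1 : lpow (Ups d Vt Wt x i) (m + 1) ξ =
        lpow (Ups d Vt Wt x i) m (Ups d Vt Wt x i ξ) :=
      lpow_comm_apply (Ups d Vt Wt x i) m ξ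
    rw [h1, ih (by omega)]
    have hne : ((⟨cnat d i j - 1 - m, by omega⟩ : Fin (cnat d i j)) : ℕ) ≠ 0 := by
      show cnat d i j - 1 - m ≠ 0
      omega
    rw [Ups_snd_ne d Vt Wt x i ξ j _ hne]
    congr 1


end L1
end QCharAux
namespace QCharAux
open QChar Module LinearMap

section Mem
variable {I : Type} [Fintype I] [DecidableEq I]
variable {Vt : I → Type} [∀ i, AddCommGroup (Vt i)] [∀ i, Module ℂ (Vt i)]
variable {Wt : I → Type} [∀ i, AddCommGroup (Wt i)] [∀ i, Module ℂ (Wt i)]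
variable {d : I → I → ℤ} {x : ∀ j i : I, Vt i →ₗ[ℂ] Vt j}
variable {A : ∀ i : I, Wt i →ₗ[ℂ] Vt i} {B : ∀ i : I, Vt i →ₗ[ℂ] Wt i} {i : I}
variable {Uo : ∀ j : I, ℤ → Submodule ℂ (Vt j)}
variable {Ui : ℤ → Submodule ℂ (Wt i × ((j : I) → Fin (cnat d i j) → Vt j))}

theorem uo_lpow_mem
    (hb3 : ∀ j j', j ≠ i → j' ≠ i → ∀ a, (Uo j' a).map (x j j') ≤ Uo j (a - d j' j))
    {j : I} (hj : j ≠ i) (m : ℕ) (a : ℤ) (u : Vt j) (hu : u ∈ Uo j a) :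
    lpow (x j j) m u ∈ Uo j (a - (m : ℤ) * d j j) :=
  lpow_mem _ _ _ (fun a' u' hu' => hb3 j j hj hj a' ⟨u', hu', rfl⟩) m a u hu

theorem ui_lpow_ups_mem
    (hb6 : ∀ a, (Ui a).map (Ups d Vt Wt x i) ≤ Ui (a - d i i))
    (m : ℕ) (a : ℤ) (ξ : Wt i × ((j : I) → Fin (cnat d i j) → Vt j)) (hξ : ξ ∈ Ui a) :
    lpow (Ups d Vt Wt x i) m ξ ∈ Ui (a - (m : ℤ) * d i i) :=
  lpow_mem _ _ _ (fun a' u' hu' => hb6 a' ⟨u', hu', rfl⟩) m a ξ hξ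

theorem psi_phi_mem (hd : CartanData d)
    (hR1 : ∀ i' j', i' ≠ j' →
      lpow (x j' j') (cnat d j' i') ∘ₗ x j' i' + x j' i' ∘ₗ lpow (x i' i') (cnat d i' j') = 0)
    (hR4 : B i ∘ₗ x i i = 0)
    (hb5 : ∀ j, j ≠ i → ∀ a, (Uo j (a + d i j)).map (Psi d Vt Wt x B i ∘ₗ x i j) ≤ Ui a)
    (hb6 : ∀ a, (Ui a).map (Ups d Vt Wt x i) ≤ Ui (a - d i i))
    (b : ℤ) (ξ : Wt i × ((j : I) → Fin (cnat d i j) → Vt j))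
    (hξ : ξ ∈ Emod d Vt Wt i Uo b) :
    Psi d Vt Wt x B i (Phi d Vt Wt x A i ξ) ∈ Ui b := by
  obtain ⟨h1, h2⟩ := (mem_Emod d Vt Wt i Uo b ξ).1 hξ
  rw [Phi_apply d Vt Wt x A i, h1, map_zero, zero_add, map_sum]
  refine Submodule.sum_mem _ fun j _ => ?_
  rw [map_sum]
  refine Submodule.sum_mem _ fun k _ => ?_
  have hj : j ≠ i := ne_of_fin hd k
  rw [psi_lpow hd hR1 hR4]
  have hu := h2 j k
  have hu' : ξ.2 j k ∈ Uo j ((b + (k : ℤ) * d i i) + d i j) := by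
    convert hu using 2
    ring
  have hmem : Psi d Vt Wt x B i (x i j (ξ.2 j k)) ∈ Ui (b + (k : ℤ) * d i i) :=
    hb5 j hj _ (Submodule.mem_map_of_mem hu')
  have hf := ui_lpow_ups_mem hb6 (k : ℕ) _ _ hmem
  have e2 : (b + (k : ℤ) * d i i) - (k : ℤ) * d i i = b := by ring
  rw [e2] at hf
  exact hf

theorem b_phi_zero (hd : CartanData d)
    (hR1 : ∀ i' j', i' ≠ j' →
      lpow (x j' j') (cnat d j' i') ∘ₗ x j' i' + x j' i' ∘ₗ lpow (x i' i') (cnat d i' j') = 0)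
    (hR4 : B i ∘ₗ x i i = 0)
    (hb5 : ∀ j, j ≠ i → ∀ a, (Uo j (a + d i j)).map (Psi d Vt Wt x B i ∘ₗ x i j) ≤ Ui a)
    (hb6 : ∀ a, (Ui a).map (Ups d Vt Wt x i) ≤ Ui (a - d i i))
    (hkerBi : ∀ a, (Ui a).map
      (LinearMap.fst ℂ (Wt i) ((j : I) → Fin (cnat d i j) → Vt j)) = ⊥)
    (b : ℤ) (ξ : Wt i × ((j : I) → Fin (cnat d i j) → Vt j))
    (hξ : ξ ∈ Emod d Vt Wt i Uo b) :
    B i (Phi d Vt Wt x A i ξ) = 0 := by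
  have h := psi_phi_mem (A := A) hd hR1 hR4 hb5 hb6 b ξ hξ
  have h2 : (Psi d Vt Wt x B i (Phi d Vt Wt x A i ξ)).1 ∈
      (Ui b).map (LinearMap.fst ℂ (Wt i) ((j : I) → Fin (cnat d i j) → Vt j)) :=
    Submodule.mem_map_of_mem h
  rw [hkerBi b] at h2
  simpa [Psi_fst] using h2

theorem xji_phi_mem (hd : CartanData d)
    (hR1 : ∀ i' j', i' ≠ j' →
      lpow (x j' j') (cnat d j' i') ∘ₗ x j' i' + x j' i' ∘ₗ lpow (x i' i') (cnat d i' j') = 0)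
    (hR4 : B i ∘ₗ x i i = 0)
    (hb4 : ∀ j, j ≠ i → ∀ a, (Ui a).map (prj d Vt Wt i j) ≤ Uo j (a - d i j))
    (hb5 : ∀ j, j ≠ i → ∀ a, (Uo j (a + d i j)).map (Psi d Vt Wt x B i ∘ₗ x i j) ≤ Ui a)
    (hb6 : ∀ a, (Ui a).map (Ups d Vt Wt x i) ≤ Ui (a - d i i))
    {j : I} (hj : j ≠ i) (b : ℤ) (ξ : Wt i × ((j : I) → Fin (cnat d i j) → Vt j))
    (hξ : ξ ∈ Emod d Vt Wt i Uo b) :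
    x j i (Phi d Vt Wt x A i ξ) ∈ Uo j (b - d i j) := by
  by_cases hc : cnat d i j = 0
  · rw [x_ji_eq_zero hR1 hd hj hc]
    simpa using Submodule.zero_mem _
  · rw [← prj_psi (B := B) (Nat.pos_of_ne_zero hc) (Phi d Vt Wt x A i ξ)]
    exact hb4 j hj b (Submodule.mem_map_of_mem (psi_phi_mem (A := A) hd hR1 hR4 hb5 hb6 b ξ hξ))

theorem xii_phi_mem (hd : CartanData d)
    (hR1 : ∀ i' j', i' ≠ j' →
      lpow (x j' j') (cnat d j' i') ∘ₗ x j' i' + x j' i' ∘ₗ lpow (x i' i') (cnat d i' j') = 0)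
    (hb3 : ∀ j j', j ≠ i → j' ≠ i → ∀ a, (Uo j' a).map (x j j') ≤ Uo j (a - d j' j))
    (b : ℤ) (ξ : Wt i × ((j : I) → Fin (cnat d i j) → Vt j))
    (hξ : ξ ∈ Emod d Vt Wt i Uo b) :
    x i i (Phi d Vt Wt x A i ξ) ∈
      (Emod d Vt Wt i Uo (b - d i i)).map (Phi d Vt Wt x A i) := by
  obtain ⟨h1, h2⟩ := (mem_Emod d Vt Wt i Uo b ξ).1 hξ
  rw [Phi_apply d Vt Wt x A i, h1, map_zero, zero_add, map_sum]
  refine Submodule.sum_mem _ fun j _ => ?_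
  rw [map_sum]
  refine Submodule.sum_mem _ fun k _ => ?_
  have hj : j ≠ i := ne_of_fin hd k
  have hu := h2 j k
  by_cases hk : (k : ℕ) + 1 < cnat d i j
  · have hterm : x i i (lpow (x i i) (k : ℕ) (x i j (ξ.2 j k))) =
        Phi d Vt Wt x A i (gen d Vt Wt i j ⟨(k : ℕ) + 1, hk⟩ (ξ.2 j k)) := by
      rw [Phi_gen d Vt Wt x A i]
      rfl
    rw [hterm]
    refine Submodule.mem_map_of_mem (gen_mem_Emod d Vt Wt i Uo _ j _ _ ?_)
    convert hu using 2
    push_cast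
    ring
  · have hk' : (k : ℕ) + 1 = cnat d i j := by have := k.isLt; omega
    have hterm : x i i (lpow (x i i) (k : ℕ) (x i j (ξ.2 j k))) =
        Phi d Vt Wt x A i (gen d Vt Wt i j ⟨0, k.pos⟩
          (- lpow (x j j) (cnat d j i) (ξ.2 j k))) := by
      calc x i i (lpow (x i i) (k : ℕ) (x i j (ξ.2 j k)))
          = lpow (x i i) ((k : ℕ) + 1) (x i j (ξ.2 j k)) := rfl
        _ = lpow (x i i) (cnat d i j) (x i j (ξ.2 j k)) := by rw [hk']
        _ = - x i j (lpow (x j j) (cnat d j i) (ξ.2 j k)) := r1_ij hR1 hj _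
        _ = x i j (- lpow (x j j) (cnat d j i) (ξ.2 j k)) := (map_neg _ _).symm
        _ = Phi d Vt Wt x A i (gen d Vt Wt i j ⟨0, k.pos⟩
              (- lpow (x j j) (cnat d j i) (ξ.2 j k))) := by
            rw [Phi_gen d Vt Wt x A i]
            rfl
    rw [hterm]
    refine Submodule.mem_map_of_mem (gen_mem_Emod d Vt Wt i Uo _ j _ _ ?_)
    refine Submodule.neg_mem _ ?_
    have hlp := uo_lpow_mem hb3 hj (cnat d j i) _ _ hu
    have hcij := cnat_mul hd (Ne.symm hj)
    have hcji := cnat_mul hd hj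
    have hsym := hd.symm i j
    have hkc : (k : ℤ) + 1 = (cnat d i j : ℤ) := by exact_mod_cast hk'
    convert hlp using 2
    push_cast
    linear_combination (- d i i) * hkc - hcij + hcji + 2 * hsym

theorem ui_le_emod (hd : CartanData d)
    (hb4 : ∀ j, j ≠ i → ∀ a, (Ui a).map (prj d Vt Wt i j) ≤ Uo j (a - d i j))
    (hb6 : ∀ a, (Ui a).map (Ups d Vt Wt x i) ≤ Ui (a - d i i))
    (hkerBi : ∀ a, (Ui a).map
      (LinearMap.fst ℂ (Wt i) ((j : I) → Fin (cnat d i j) → Vt j)) = ⊥)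
    (a : ℤ) : Ui a ≤ Emod d Vt Wt i Uo (a + d i i) := by
  intro ξ hξ
  rw [mem_Emod]
  constructor
  · have h0 : (LinearMap.fst ℂ (Wt i) ((j : I) → Fin (cnat d i j) → Vt j)) ξ ∈
        (Ui a).map (LinearMap.fst ℂ (Wt i) ((j : I) → Fin (cnat d i j) → Vt j)) :=
      Submodule.mem_map_of_mem hξ
    rw [hkerBi a] at h0
    simpa using h0
  · intro j k
    have hj : j ≠ i := ne_of_fin hd k
    have hklt := k.isLt
    have h1 : prj d Vt Wt i j
        (lpow (Ups d Vt Wt x i) (cnat d i j - 1 - (k : ℕ)) ξ) = ξ.2 j k := by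
      rw [prj_lpow_ups (cnat d i j - 1 - (k : ℕ)) (by omega) ξ]
      exact congrArg (ξ.2 j) (Fin.ext (by
        show cnat d i j - 1 - (cnat d i j - 1 - (k : ℕ)) = (k : ℕ)
        omega))
    rw [← h1]
    have hm2 := ui_lpow_ups_mem hb6 (cnat d i j - 1 - (k : ℕ)) a ξ hξ
    have hm3 := hb4 j hj _ (Submodule.mem_map_of_mem hm2)
    convert hm3 using 2
    have hcij := cnat_mul hd (Ne.symm hj)
    have hcast : ((cnat d i j - 1 - (k : ℕ) : ℕ) : ℤ) =
        (cnat d i j : ℤ) - 1 - (k : ℤ) := by omega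
    rw [hcast]
    linear_combination hcij

theorem xij_mem_phi_emod (hd : CartanData d)
    (hR1 : ∀ i' j', i' ≠ j' →
      lpow (x j' j') (cnat d j' i') ∘ₗ x j' i' + x j' i' ∘ₗ lpow (x i' i') (cnat d i' j') = 0)
    {j : I} (hj : j ≠ i) (a : ℤ) (u : Vt j) (hu : u ∈ Uo j a) :
    x i j u ∈ (Emod d Vt Wt i Uo (a - d j i)).map (Phi d Vt Wt x A i) := by
  by_cases hc : cnat d i j = 0
  · rw [x_ij_eq_zero hR1 hd hj hc]
    simpa using Submodule.zero_mem _
  · have hterm : x i j u = Phi d Vt Wt x A i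
        (gen d Vt Wt i j ⟨0, Nat.pos_of_ne_zero hc⟩ u) := by
      rw [Phi_gen d Vt Wt x A i]
      rfl
    rw [hterm]
    refine Submodule.mem_map_of_mem (gen_mem_Emod d Vt Wt i Uo _ j _ u ?_)
    convert hu using 2
    push_cast
    linear_combination hd.symm i j

theorem phi_emod_le_vg (hd : CartanData d)
    {Vg : ∀ i : I, ℤ → Submodule ℂ (Vt i)}
    (hb2 : ∀ j, j ≠ i → ∀ a, Uo j a ≤ Vg j a)
    (hx : ∀ j i' a, (Vg i' a).map (x j i') ≤ Vg j (a - d i' j))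
    (b : ℤ) : (Emod d Vt Wt i Uo b).map (Phi d Vt Wt x A i) ≤ Vg i b := by
  rintro _ ⟨ξ, hξ, rfl⟩
  obtain ⟨h1, h2⟩ := (mem_Emod d Vt Wt i Uo b ξ).1 hξ
  rw [Phi_apply d Vt Wt x A i, h1, map_zero, zero_add]
  refine Submodule.sum_mem _ fun j _ => Submodule.sum_mem _ fun k _ => ?_
  have hj : j ≠ i := ne_of_fin hd k
  have hu : ξ.2 j k ∈ Vg j ((b - d i i) + d i j + ((k : ℤ) + 1) * d i i) :=
    hb2 j hj _ (h2 j k)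
  have h3 := hx i j _ (Submodule.mem_map_of_mem hu)
  have h4 := lpow_mem (x i i) (Vg i) (d i i)
    (fun a' u' hu' => hx i i a' ⟨u', hu', rfl⟩) (k : ℕ) _ _ h3
  convert h4 using 2
  linear_combination - hd.symm i j

end Mem
end QCharAux
namespace QCharAux
open QChar Module LinearMap

section Dim
variable {I : Type} [Fintype I] [DecidableEq I]
variable {Vt : I → Type} [∀ i, AddCommGroup (Vt i)] [∀ i, Module ℂ (Vt i)]
variable {Wt : I → Type} [∀ i, AddCommGroup (Wt i)] [∀ i, Module ℂ (Wt i)]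
variable {d : I → I → ℤ} {x : ∀ j i : I, Vt i →ₗ[ℂ] Vt j}
variable {A : ∀ i : I, Wt i →ₗ[ℂ] Vt i} {B : ∀ i : I, Vt i →ₗ[ℂ] Wt i} {i : I}
variable {Uo : ∀ j : I, ℤ → Submodule ℂ (Vt j)}
variable {Ui : ℤ → Submodule ℂ (Wt i × ((j : I) → Fin (cnat d i j) → Vt j))}
variable [∀ j, FiniteDimensional ℂ (Vt j)] [∀ j, FiniteDimensional ℂ (Wt j)]

theorem finrank_emod (b : ℤ) :
    finrank ℂ (Emod d Vt Wt i Uo b) =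
      ∑ j : I, ∑ k : Fin (cnat d i j),
        finrank ℂ (Uo j ((b - d i i) + d i j + ((k : ℤ) + 1) * d i i)) := by
  rw [Emod, finrank_submodule_prod, finrank_bot, zero_add,
    finrank_submodule_pi (fun j => Fin (cnat d i j) → Vt j)]
  exact Finset.sum_congr rfl fun j _ =>
    finrank_submodule_pi (fun _ : Fin (cnat d i j) => Vt j) _

theorem emod_key (hd : CartanData d)
    (hb1 : ∀ a, Ui a ≤ LinearMap.ker (Phi d Vt Wt x A i))
    (hb4 : ∀ j, j ≠ i → ∀ a, (Ui a).map (prj d Vt Wt i j) ≤ Uo j (a - d i j))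
    (hb6 : ∀ a, (Ui a).map (Ups d Vt Wt x i) ≤ Ui (a - d i i))
    (hkerBi : ∀ a, (Ui a).map
      (LinearMap.fst ℂ (Wt i) ((j : I) → Fin (cnat d i j) → Vt j)) = ⊥)
    (b : ℤ) :
    finrank ℂ ((Emod d Vt Wt i Uo b).map (Phi d Vt Wt x A i)) +
      finrank ℂ (Ui (b - d i i)) ≤ finrank ℂ (Emod d Vt Wt i Uo b) := by
  have h1 := finrank_map_add_finrank_inf_ker (Phi d Vt Wt x A i) (Emod d Vt Wt i Uo b)
  have h2 : Ui (b - d i i) ≤ Emod d Vt Wt i Uo b ⊓ LinearMap.ker (Phi d Vt Wt x A i) := by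
    refine le_inf ?_ (hb1 _)
    have h3 := ui_le_emod hd hb4 hb6 hkerBi (b - d i i)
    rw [show b - d i i + d i i = b from by ring] at h3
    exact h3
  have h4 := Submodule.finrank_mono h2
  omega

end Dim
end QCharAux
open QChar in
/-- for a `θ`-stable point with `θ_i < 0` and a subrepresentation `Ū` of
the reflected collection contained in `Ker B`, the collection `U` with `U_j = Ū_j` for
`j ≠ i` and `U_i^b = Φ_i^{b-d_{ii}}(0 ⊕ ⨁_{j≠i} ⨁_{ℓ} Ū_j^{b+(ℓ-1)d_{ii}})` is a
subrepresentation of `V` contained in `Ker B`, and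
`(s_i(θ), dim Ū) ≤ (θ, dim U) ≤ 0`. -/
theorem extremal_qchar_stmt7 {I : Type} [Fintype I] [DecidableEq I]
    (d : I → I → ℤ) (v w : I → ℤ → ℕ)
    (Vt : I → Type) [∀ i, AddCommGroup (Vt i)] [∀ i, Module ℂ (Vt i)]
    (Wt : I → Type) [∀ i, AddCommGroup (Wt i)] [∀ i, Module ℂ (Wt i)]
    (Vg : ∀ i : I, ℤ → Submodule ℂ (Vt i)) (Wg : ∀ i : I, ℤ → Submodule ℂ (Wt i))
    (x : ∀ j i : I, Vt i →ₗ[ℂ] Vt j) (A : ∀ i : I, Wt i →ₗ[ℂ] Vt i)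
    (B : ∀ i : I, Vt i →ₗ[ℂ] Wt i)
    (hd : QChar.CartanData d)
    (hv : (Function.support fun p : I × ℤ => v p.1 p.2).Finite)
    (hw : (Function.support fun p : I × ℤ => w p.1 p.2).Finite)
    (hrep : QChar.IsRep d v w Vt Wt Vg Wg x A B)
    (i : I) (θ : I → ℝ) (hθi : θ i < 0)
    (hstab : QChar.IsStable d v Vt Wt Vg Wg x A B θ)
    (Uo : ∀ j : I, ℤ → Submodule ℂ (Vt j))
    (Ui : ℤ → Submodule ℂ (Wt i × ((j : I) → Fin (QChar.cnat d i j) → Vt j)))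
    (hbar : QChar.BarSubrep d Vt Wt Vg Wg x A B i Uo Ui)
    (hkerB : ∀ j : I, j ≠ i → ∀ a, (Uo j a).map (B j) = ⊥)
    (hkerBi : ∀ a, (Ui a).map
      (LinearMap.fst ℂ (Wt i) ((j : I) → Fin (QChar.cnat d i j) → Vt j)) = ⊥)
    (U : ∀ j : I, ℤ → Submodule ℂ (Vt j))
    (hUo : ∀ j : I, j ≠ i → U j = Uo j)
    (hUi : ∀ b : ℤ, U i b =
      ((⊥ : Submodule ℂ (Wt i)).prod
        (Submodule.pi Set.univ fun j => Submodule.pi Set.univ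
          fun k : Fin (QChar.cnat d i j) =>
            Uo j ((b - d i i) + d i j + ((k : ℤ) + 1) * d i i))).map
        (QChar.Phi d Vt Wt x A i)) :
    QChar.IsSubrep d Vt Vg x U ∧
    (∀ j a, (U j a).map (B j) = ⊥) ∧
    QChar.pairθ d (QChar.sref d i θ) (QChar.dimbar d Vt Wt i Uo Ui)
      ≤ QChar.pairθ d θ (QChar.dimv Vt U) ∧
    QChar.pairθ d θ (QChar.dimv Vt U) ≤ 0 := by
  classical
  obtain ⟨hfV, hfW, hintV, hintW, hrkV, hrkW, hx7, hA8, hB9, hR1, hR2, hR3, hR4⟩ := hrep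
  obtain ⟨hb1, hb2, hb3, hb4, hb5, hb6⟩ := hbar
  haveI : ∀ j, FiniteDimensional ℂ (Vt j) := hfV
  haveI : ∀ j, FiniteDimensional ℂ (Wt j) := hfW
  have hR4i : B i ∘ₗ x i i = 0 := hR4 i
  have hUi' : ∀ b : ℤ, U i b =
      (QCharAux.Emod d Vt Wt i Uo b).map (QChar.Phi d Vt Wt x A i) := hUi
  have hb1' : ∀ a, Ui a ≤ LinearMap.ker (QChar.Phi d Vt Wt x A i) :=
    fun a => (hb1 a).trans inf_le_right
  -- Part 1: U is a subrepresentation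
  have hle : ∀ j a, U j a ≤ Vg j a := by
    intro j a
    rcases eq_or_ne j i with rfl | hj
    · rw [hUi' a]
      exact QCharAux.phi_emod_le_vg hd hb2 hx7 a
    · rw [hUo j hj]
      exact hb2 j hj a
  have hmap : ∀ j' j a, (U j a).map (x j' j) ≤ U j' (a - d j j') := by
    intro j' j a
    rintro _ ⟨u, hu, rfl⟩
    rcases eq_or_ne j i with rfl | hj
    · rw [hUi' a] at hu
      obtain ⟨ξ, hξ, rfl⟩ := hu
      rcases eq_or_ne j' j with rfl | hj'
      · rw [hUi' (a - d j' j')]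
        exact QCharAux.xii_phi_mem hd hR1 hb3 a ξ hξ
      · rw [hUo j' hj']
        exact QCharAux.xji_phi_mem hd hR1 hR4i hb4 hb5 hb6 hj' a ξ hξ
    · rw [hUo j hj] at hu
      rcases eq_or_ne j' i with rfl | hj'
      · rw [hUi' (a - d j j')]
        exact QCharAux.xij_mem_phi_emod hd hR1 hj a u hu
      · rw [hUo j' hj']
        exact hb3 j' j hj' hj a ⟨u, hu, rfl⟩
  have hsub : QChar.IsSubrep d Vt Vg x U := ⟨hle, hmap⟩
  -- Part 2: U is contained in Ker B
  have hker : ∀ j a, (U j a).map (B j) = ⊥ := by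
    intro j a
    rcases eq_or_ne j i with rfl | hj
    · rw [hUi' a]
      rw [Submodule.eq_bot_iff]
      rintro _ ⟨_, ⟨ξ, hξ, rfl⟩, rfl⟩
      exact QCharAux.b_phi_zero hd hR1 hR4i hb5 hb6 hkerBi a ξ hξ
    · rw [hUo j hj]
      exact hkerB j hj a
  refine ⟨hsub, hker, ?_, hstab.1 U hsub hker⟩
  -- Part 3: the dimension inequality
  have hVg_bot : ∀ j a, v j a = 0 → Vg j a = ⊥ := by
    intro j a h
    have h2 := hrkV j a
    rw [h] at h2
    exact Submodule.finrank_eq_zero.mp h2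
  have hUo_bot : ∀ j, j ≠ i → ∀ a, v j a = 0 → Uo j a = ⊥ := by
    intro j hj a h
    have h2 := hb2 j hj a
    rw [hVg_bot j a h] at h2
    exact le_bot_iff.mp h2
  have hU_bot : ∀ b, v i b = 0 → U i b = ⊥ := by
    intro b h
    have h2 := hle i b
    rw [hVg_bot i b h] at h2
    exact le_bot_iff.mp h2
  have hSv : ∀ j, {a : ℤ | v j a ≠ 0}.Finite := by
    intro j
    have h1 : {a : ℤ | v j a ≠ 0} = (fun a : ℤ => (j, a)) ⁻¹'
        (Function.support fun p : I × ℤ => v p.1 p.2) := rfl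
    rw [h1]
    exact hv.preimage (Function.Injective.injOn
      (fun a b hab => congrArg Prod.snd hab))
  set fN : ℤ → ℝ := fun b => (finrank ℂ (U i b) : ℝ) with hfN
  set fT : ℤ → ℝ := fun a => (finrank ℂ (Ui a) : ℝ) with hfT
  set fM : I → ℤ → ℝ := fun j a => (finrank ℂ (Uo j a) : ℝ) with hfM
  set fR : ℤ → ℝ := fun b => ∑ j : I, ∑ k : Fin (QChar.cnat d i j),
      fM j ((b - d i i) + d i j + ((k : ℤ) + 1) * d i i) with hfR
  have hsN : (Function.support fN).Finite := by
    refine (hSv i).subset ?_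
    intro b hb
    simp only [Function.mem_support] at hb
    by_contra h
    simp only [Set.mem_setOf_eq, not_not] at h
    exact hb (by simp [hfN, hU_bot b h])
  have hsM : ∀ j, j ≠ i → (Function.support (fM j)).Finite := by
    intro j hj
    refine (hSv j).subset ?_
    intro a ha
    simp only [Function.mem_support] at ha
    by_contra h
    simp only [Set.mem_setOf_eq, not_not] at h
    exact ha (by simp [hfM, hUo_bot j hj a h])
  have hTle : ∀ a : ℤ, finrank ℂ (Ui a) ≤ ∑ j : I, ∑ k : Fin (QChar.cnat d i j),
      finrank ℂ (Uo j ((a + d i i - d i i) + d i j + ((k : ℤ) + 1) * d i i)) := by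
    intro a
    have h := Submodule.finrank_mono (QCharAux.ui_le_emod hd hb4 hb6 hkerBi a)
    rwa [QCharAux.finrank_emod] at h
  have hsT : (Function.support fT).Finite := by
    have hbig : (⋃ (j : I) (k : Fin (QChar.cnat d i j)),
        ((fun a : ℤ => (a + d i i - d i i) + d i j + ((k : ℤ) + 1) * d i i) ⁻¹'
          {e : ℤ | v j e ≠ 0})).Finite :=
      Set.finite_iUnion fun j => Set.finite_iUnion fun k =>
        (hSv j).preimage (Function.Injective.injOn fun a b hab => by simpa using hab)
    refine hbig.subset ?_
    intro a ha
    simp only [Function.mem_support] at ha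
    by_contra hmem
    simp only [Set.mem_iUnion, Set.mem_preimage, Set.mem_setOf_eq, not_exists, not_not] at hmem
    apply ha
    have h0 : ∑ j : I, ∑ k : Fin (QChar.cnat d i j),
        finrank ℂ (Uo j ((a + d i i - d i i) + d i j + ((k : ℤ) + 1) * d i i)) = 0 := by
      refine Finset.sum_eq_zero fun j _ => Finset.sum_eq_zero fun k _ => ?_
      have hj : j ≠ i := QCharAux.ne_of_fin hd k
      rw [hUo_bot j hj _ (hmem j k)]
      exact finrank_bot ℂ _
    have h1 := hTle a
    rw [h0, Nat.le_zero] at h1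
    simp [hfT, h1]
  have hsTsh : (Function.support fun b : ℤ => fT (b - d i i)).Finite := by
    have h1 : (Function.support fun b : ℤ => fT (b - d i i)) =
        (fun b : ℤ => b - d i i) ⁻¹' (Function.support fT) := rfl
    rw [h1]
    exact hsT.preimage (Function.Injective.injOn fun a b hab => by simpa using hab)
  have hsMsh : ∀ (j : I) (k : Fin (QChar.cnat d i j)),
      (Function.support fun b : ℤ =>
        fM j ((b - d i i) + d i j + ((k : ℤ) + 1) * d i i)).Finite := by
    intro j k
    have h1 : (Function.support fun b : ℤ =>
        fM j ((b - d i i) + d i j + ((k : ℤ) + 1) * d i i)) =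
        (fun b : ℤ => (b - d i i) + d i j + ((k : ℤ) + 1) * d i i) ⁻¹'
          (Function.support (fM j)) := rfl
    rw [h1]
    exact (hsM j (QCharAux.ne_of_fin hd k)).preimage
      (Function.Injective.injOn fun a b hab => by simpa using hab)
  have hsRj : ∀ j : I, (Function.support fun b : ℤ => ∑ k : Fin (QChar.cnat d i j),
      fM j ((b - d i i) + d i j + ((k : ℤ) + 1) * d i i)).Finite := by
    intro j
    refine Set.Finite.subset (Set.finite_iUnion fun k : Fin (QChar.cnat d i j) =>
      hsMsh j k) ?_
    intro b hb
    simp only [Function.mem_support] at hb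
    by_contra h
    simp only [Set.mem_iUnion, Function.mem_support, not_exists, not_not] at h
    exact hb (Finset.sum_eq_zero fun k _ => h k)
  have hsR : (Function.support fR).Finite := by
    refine Set.Finite.subset (Set.finite_iUnion fun j : I => hsRj j) ?_
    intro b hb
    simp only [Function.mem_support, hfR] at hb
    by_contra h
    simp only [Set.mem_iUnion, Function.mem_support, not_exists, not_not] at h
    exact hb (Finset.sum_eq_zero fun j _ => h j)
  -- per-degree key inequality
  have hF1 : ∀ b : ℤ, fN b + fT (b - d i i) ≤ fR b := by
    intro b
    have h1 := QCharAux.emod_key (x := x) (A := A) (Uo := Uo) (Ui := Ui)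
      hd hb1' hb4 hb6 hkerBi b
    rw [QCharAux.finrank_emod, ← hUi' b] at h1
    simp only [hfN, hfT, hfM, hfR]
    push_cast
    exact_mod_cast h1
  -- summed inequality
  have hbij1 : Function.Bijective (fun b : ℤ => b - d i i) :=
    ⟨fun a b hab => by simpa using hab, fun y => ⟨y + d i i, by ring⟩⟩
  have hsum1 : (∑ᶠ b : ℤ, fN b) + (∑ᶠ a : ℤ, fT a) ≤ ∑ᶠ b : ℤ, fR b := by
    rw [show (∑ᶠ a : ℤ, fT a) = ∑ᶠ b : ℤ, fT (b - d i i) from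
      (finsum_eq_of_bijective (fun b : ℤ => b - d i i) hbij1 fun b => rfl).symm]
    rw [← finsum_add_distrib hsN hsTsh]
    set s : Finset ℤ := (hsN.union (hsTsh.union hsR)).toFinset with hs
    have hsub1 : (Function.support fun b : ℤ => fN b + fT (b - d i i)) ⊆ ↑s := by
      intro b hb
      simp only [Function.mem_support] at hb
      simp only [hs, Set.Finite.coe_toFinset, Set.mem_union]
      by_contra h
      push_neg at h
      obtain ⟨h1, h2, -⟩ := h
      simp only [Function.mem_support, not_not] at h1 h2
      rw [h1, h2, add_zero] at hb
      exact hb rfl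
    have hsub2 : (Function.support fR) ⊆ ↑s := by
      intro b hb
      simp only [hs, Set.Finite.coe_toFinset, Set.mem_union]
      exact Or.inr (Or.inr hb)
    rw [finsum_eq_sum_of_support_subset _ hsub1, finsum_eq_sum_of_support_subset _ hsub2]
    exact Finset.sum_le_sum fun b _ => hF1 b
  -- reorganize the right-hand side
  have hswap : ∑ᶠ b : ℤ, fR b = ∑ j : I, (QChar.cnat d i j : ℝ) * ∑ᶠ a : ℤ, fM j a := by
    rw [show (fun b : ℤ => fR b) = fun b : ℤ => ∑ j : I, ∑ k : Fin (QChar.cnat d i j),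
      fM j ((b - d i i) + d i j + ((k : ℤ) + 1) * d i i) from rfl]
    rw [finsum_sum_comm _ _ fun j _ => hsRj j]
    refine Finset.sum_congr rfl fun j _ => ?_
    rw [finsum_sum_comm _ _ fun k _ => hsMsh j k]
    have hMsh : ∀ k : Fin (QChar.cnat d i j),
        (∑ᶠ b : ℤ, fM j ((b - d i i) + d i j + ((k : ℤ) + 1) * d i i)) =
          ∑ᶠ a : ℤ, fM j a := by
      intro k
      exact finsum_eq_of_bijective (fun b : ℤ => (b - d i i) + d i j + ((k : ℤ) + 1) * d i i)
        ⟨fun a b hab => by simpa using hab, fun y => ⟨y + d i i - d i j - ((k : ℤ) + 1) * d i i, by ring⟩⟩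
        fun b => rfl
    rw [Finset.sum_congr rfl fun k _ => hMsh k, Finset.sum_const, Finset.card_univ,
      Fintype.card_fin, nsmul_eq_mul]
  have hkey : (∑ᶠ b : ℤ, fN b) + (∑ᶠ a : ℤ, fT a) ≤
      ∑ j : I, (QChar.cnat d i j : ℝ) * ∑ᶠ a : ℤ, fM j a := hswap ▸ hsum1
  have hkey' : (∑ᶠ b : ℤ, fN b) + (∑ᶠ a : ℤ, fT a) ≤
      ∑ j ∈ Finset.univ.erase i, (QChar.cnat d i j : ℝ) * ∑ᶠ a : ℤ, fM j a := by
    have h1 := hkey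
    rw [← Finset.add_sum_erase _ _ (Finset.mem_univ i), QCharAux.cnat_diag hd i] at h1
    simpa using h1
  -- expand the two pairings
  have hpair1 : QChar.pairθ d θ (QChar.dimv Vt U) =
      (QChar.dl d i : ℝ) * θ i * (∑ᶠ b : ℤ, fN b) +
        ∑ j ∈ Finset.univ.erase i, (QChar.dl d j : ℝ) * θ j * (∑ᶠ a : ℤ, fM j a) := by
    rw [QChar.pairθ, ← Finset.add_sum_erase _ _ (Finset.mem_univ i)]
    refine congrArg₂ (· + ·) ?_ (Finset.sum_congr rfl fun j hj => ?_)
    · have hA : (∑ᶠ a : ℤ, ((QChar.dimv Vt U i a : ℝ))) = ∑ᶠ b : ℤ, fN b :=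
        finsum_congr fun a => by simp [QChar.dimv, hfN]
      rw [hA]
    · have hj' : j ≠ i := Finset.ne_of_mem_erase hj
      have hA : (∑ᶠ a : ℤ, ((QChar.dimv Vt U j a : ℝ))) = ∑ᶠ a : ℤ, fM j a :=
        finsum_congr fun a => by
          simp only [QChar.dimv]
          rw [hUo j hj']
          simp [hfM]
      rw [hA]
  have hpair2 : QChar.pairθ d (QChar.sref d i θ) (QChar.dimbar d Vt Wt i Uo Ui) =
      (QChar.dl d i : ℝ) * (θ i - (QChar.cc d i i : ℝ) * θ i) * (∑ᶠ a : ℤ, fT a) +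
        ∑ j ∈ Finset.univ.erase i, (QChar.dl d j : ℝ) * (θ j - (QChar.cc d j i : ℝ) * θ i) *
          (∑ᶠ a : ℤ, fM j a) := by
    rw [QChar.pairθ, ← Finset.add_sum_erase _ _ (Finset.mem_univ i)]
    simp only [QChar.sref]
    refine congrArg₂ (· + ·) ?_ (Finset.sum_congr rfl fun j hj => ?_)
    · have hA : (∑ᶠ a : ℤ, ((QChar.dimbar d Vt Wt i Uo Ui i a : ℝ))) = ∑ᶠ a : ℤ, fT a :=
        finsum_congr fun a => by simp [QChar.dimbar, hfT]
      rw [hA]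
    · have hj' : j ≠ i := Finset.ne_of_mem_erase hj
      have hA : (∑ᶠ a : ℤ, ((QChar.dimbar d Vt Wt i Uo Ui j a : ℝ))) = ∑ᶠ a : ℤ, fM j a :=
        finsum_congr fun a => by simp [QChar.dimbar, hfM, hj']
      rw [hA]
  -- per-vertex identity for the reflected pairing coefficients
  have hcoef : ∀ j, j ≠ i →
      (QChar.dl d j : ℝ) * (θ j - (QChar.cc d j i : ℝ) * θ i) * (∑ᶠ a : ℤ, fM j a) =
      (QChar.dl d j : ℝ) * θ j * (∑ᶠ a : ℤ, fM j a) +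
        (QChar.dl d i : ℝ) * θ i * ((QChar.cnat d i j : ℝ) * (∑ᶠ a : ℤ, fM j a)) := by
    intro j hj
    have h1 : (QChar.dl d j : ℝ) * (QChar.cc d j i : ℝ) = ((d j i : ℤ) : ℝ) := by
      exact_mod_cast congrArg (fun z : ℤ => (z : ℝ)) (QCharAux.dl_cc hd j i)
    have h2 : ((d j i : ℤ) : ℝ) = -((QChar.dl d i : ℝ) * (QChar.cnat d i j : ℝ)) := by
      have e1 := QCharAux.dl_cc hd i j
      have e2 := QCharAux.cnat_cast hd (Ne.symm hj)
      have e3 := hd.symm j i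
      have e4 : (d j i : ℤ) = -(QChar.dl d i * (QChar.cnat d i j : ℤ)) := by
        rw [e2]
        linear_combination e3 - e1
      exact_mod_cast congrArg (fun z : ℤ => (z : ℝ)) e4
    calc (QChar.dl d j : ℝ) * (θ j - (QChar.cc d j i : ℝ) * θ i) * (∑ᶠ a : ℤ, fM j a)
        = (QChar.dl d j : ℝ) * θ j * (∑ᶠ a : ℤ, fM j a) -
            ((QChar.dl d j : ℝ) * (QChar.cc d j i : ℝ)) * θ i * (∑ᶠ a : ℤ, fM j a) := by
          ring
      _ = _ := by rw [h1, h2]; ring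
  have hcc2 : (QChar.cc d i i : ℝ) = 2 := by
    exact_mod_cast congrArg (fun z : ℤ => (z : ℝ)) (QCharAux.cc_diag hd i)
  have hdlpos : (0 : ℝ) < (QChar.dl d i : ℝ) := by
    exact_mod_cast QCharAux.dl_pos hd i
  rw [hpair1, hpair2, hcc2]
  rw [Finset.sum_congr rfl fun j hj => hcoef j (Finset.ne_of_mem_erase hj)]
  rw [Finset.sum_add_distrib, ← Finset.mul_sum]
  have hmul := mul_le_mul_of_nonpos_left hkey'
    (by nlinarith : (QChar.dl d i : ℝ) * θ i ≤ 0)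
  nlinarith [hmul]
end

section
/- Let i ∈ I and θ = (θ_i) ∈ ℝ^I with θ_i < 0, let V be a θ-stable point of P_{v,w}, and let V̄ be its reflected collection. Let Ū be a subrepresentation of V̄ that contains Im A (i.e. it contains the images of all maps A_j for j ≠ i and of all maps Ā_i). Define a collection U of subspaces of V by U_j^b := Ū_j^b for j ≠ i and U_i^b := Φ_i^{b−d_{ii}}( W_i^{b−d_i} ⊕ ⨁_{j≠i} ⨁_{ℓ∈L(i,j)} Ū_j^{b+(ℓ−1)d_{ii}} ). Then U is a subrepresentation of V containing Im A, and 0 ≤ (θ, v − dim U) ≤ (s_i(θ), S_i(v) − dim Ū). In particular, every subrepresentation of V̄ containing Im A satisfies the second θ-stability inequality for the stability parameter s_i(θ) and dimension vector S_i(v). -/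
/- Common setup: (graded, generalized) quiver varieties attached to a symmetrized
Cartan matrix, following Neguț, "Extremal monomials of q-characters". -/

open Module LinearMap Finset

/-!
Write `Φ, Ψ, Υ` for `Phi, Psi, Ups` at the vertex `i`. Relations (R1) and (R3) give
`Φ ∘ Υ = x_{ii} ∘ Φ`, relations (R1) and (R4) give `Ψ ∘ x_{ii} = Υ ∘ Ψ`, and the last
`V_j`-component of `Ψ` is `x_{ji}`. As `Ū` is closed under `Υ`, `Ψ ∘ x_{ij}`, `Ψ ∘ A_i` and the
projections, these identities show that `U_i = Φ(W_i ⊕ ⨁ Ū_j)` is stable under every `x`, so `U`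
is a subrepresentation containing `Im A`, and `θ`-stability gives `(θ, v - dim U) ≥ 0`.

For the second inequality, put `D^a = W_i ⊕ ⨁ Ū_j ⊆ D_i^a`, so that `U_i^{a+d_ii} = Φ(D^a)`.
Every component of `ū ∈ Ū_i^a` is `prj (Υ^m ū) ∈ Ū_j`, hence `Ū_i^a ⊆ D^a ∩ Ker Φ` and rank-nullity
gives `dim Ū_i^a + dim U_i^{a+d_ii} ≤ dim D^a`. Summed over `a`, and by the symmetry
`d_j c_{ji} = d_i c_{ij}`, the difference `(s_i θ, S_i v - dim Ū) - (θ, v - dim U)` is `-d_i θ_i`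
times the slack of this inequality, which is nonnegative since `θ_i < 0`.
-/

namespace Function

theorem HasFiniteSupport.finsetSum {ι α M : Type*} [AddCommMonoid M] (s : Finset ι)
    {f : ι → α → M} (hf : ∀ j ∈ s, HasFiniteSupport (f j)) :
    HasFiniteSupport fun a => ∑ j ∈ s, f j a := by
  convert HasFiniteSupport.sum (f := fun j : s => f j) (fun j => hf j j.2) Finset.univ using 2
  exact (Finset.sum_coe_sort s (f · _)).symm

theorem HasFiniteSupport.of_nonneg_of_le {α : Type*} {f g : α → ℤ} (hg : HasFiniteSupport g)
    (hf₀ : ∀ a, 0 ≤ f a) (hfg : ∀ a, f a ≤ g a) : HasFiniteSupport f :=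
  Set.Finite.subset hg fun a ha => by
    have := hf₀ a; have := hfg a
    simp only [mem_support] at ha ⊢
    omega

theorem HasFiniteSupport.comp_add_const {M : Type*} [Zero M] {f : ℤ → M}
    (hf : HasFiniteSupport f) (c : ℤ) : HasFiniteSupport fun a => f (a + c) :=
  hf.comp_of_injective (add_left_injective c)

end Function

open Function

theorem finsum_comp_add_const {M : Type*} [AddCommMonoid M] (f : ℤ → M) (c : ℤ) :
    ∑ᶠ a, f (a + c) = ∑ᶠ a, f a :=
  finsum_comp_equiv (Equiv.addRight c)

theorem finsum_sum_sum_comp_add {ι : Type*} (s : Finset ι) (m : ι → ℕ) (c : ι → ℕ → ℤ)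
    {f : ι → ℤ → ℤ} (hf : ∀ j ∈ s, HasFiniteSupport (f j)) :
    ∑ᶠ a, ∑ j ∈ s, ∑ k ∈ Finset.range (m j), f j (a + c j k) =
      ∑ j ∈ s, (m j : ℤ) * ∑ᶠ a, f j a := by
  have hshift : ∀ j ∈ s, ∀ k, HasFiniteSupport fun a => f j (a + c j k) :=
    fun j hj k => (hf j hj).comp_add_const _
  rw [finsum_sum_comm _ _ fun j hj =>
    HasFiniteSupport.sum (fun k => (hshift j hj k)) (Finset.range (m j))]
  refine Finset.sum_congr rfl fun j hj => ?_
  rw [finsum_sum_comm _ _ fun k _ => hshift j hj k]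
  simp [finsum_comp_add_const]

theorem Module.End.pow_apply_mem_of_map_le {R M : Type*} [Semiring R] [AddCommMonoid M] [Module R M]
    {G : ℤ → Submodule R M} {f : Module.End R M} {c : ℤ} (hf : ∀ a, (G a).map f ≤ G (a - c))
    (n : ℕ) {a : ℤ} {u : M} (hu : u ∈ G a) : (f ^ n) u ∈ G (a - n * c) := by
  induction n with
  | zero => simpa using hu
  | succ n ih =>
    rw [pow_succ', Module.End.mul_apply]
    convert hf _ (Submodule.mem_map_of_mem ih) using 2
    push_cast
    ring

theorem Module.End.sum_pow_apply_rotate {R M N : Type*} [Semiring R] [AddCommGroup M] [Module R M]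
    [AddCommGroup N] [Module R N] (f : Module.End R M) (g : N →ₗ[R] M) (h : Module.End R N)
    {n : ℕ} (hrel : (f ^ n) ∘ₗ g + g ∘ₗ h = 0) (q r : Fin n → N)
    (hr₀ : ∀ k : Fin n, (k : ℕ) = 0 → r k = -h (q ⟨n - 1, Nat.sub_lt k.pos Nat.one_pos⟩))
    (hr : ∀ k : Fin n, (k : ℕ) ≠ 0 → r k = q ⟨k - 1, by omega⟩) :
    ∑ k : Fin n, (f ^ (k : ℕ)) (g (r k)) = f (∑ k : Fin n, (f ^ (k : ℕ)) (g (q k))) := by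
  cases n with
  | zero => simp
  | succ n =>
    rw [Fin.sum_univ_succ, Fin.sum_univ_castSucc, map_add, map_sum, add_comm]
    congr 1
    · refine Finset.sum_congr rfl fun k _ => ?_
      rw [hr k.succ (Nat.succ_ne_zero _)]
      simp [pow_succ']
      rfl
    · rw [hr₀ 0 rfl]
      show (f ^ 0) (g (-h (q (Fin.last n)))) = f ((f ^ n) (g (q (Fin.last n))))
      rw [pow_zero, Module.End.one_apply, map_neg, ← Module.End.mul_apply, ← pow_succ']
      exact (eq_neg_of_add_eq_zero_left (LinearMap.congr_fun hrel _)).symm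

theorem Submodule.finrank_add_finrank_map_le {K M N : Type*} [DivisionRing K] [AddCommGroup M]
    [Module K M] [FiniteDimensional K M] [AddCommGroup N] [Module K N] (f : M →ₗ[K] N)
    {P Q : Submodule K M} (hQP : Q ≤ P) (hQ : Q ≤ LinearMap.ker f) :
    Module.finrank K Q + Module.finrank K (P.map f) ≤ Module.finrank K P := by
  rw [← LinearMap.range_domRestrict, ← LinearMap.finrank_range_add_finrank_ker (f.domRestrict P),
    add_comm, ← (Submodule.comapSubtypeEquivOfLe hQP).finrank_eq]
  refine Nat.add_le_add_left (Submodule.finrank_mono fun z hz => ?_) _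
  exact LinearMap.mem_ker.2 (hQ hz)

namespace QChar

open Function Finset

namespace CartanData

variable {I : Type} {d : I → I → ℤ}

theorem two_mul_dl (hd : CartanData d) (i : I) : 2 * dl d i = d i i := by
  obtain ⟨r, hr⟩ := hd.even i
  simp only [dl, hr]
  omega

theorem dl_pos (hd : CartanData d) (i : I) : 0 < dl d i := by
  have := hd.two_mul_dl i
  have := hd.pos i
  omega

theorem cc_mul (hd : CartanData d) (i j : I) : cc d i j * d i i = 2 * d i j :=
  Int.ediv_mul_cancel (hd.dvd i j)

theorem cc_self (hd : CartanData d) (i : I) : cc d i i = 2 :=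
  mul_right_cancel₀ (hd.pos i).ne' (hd.cc_mul i i)

theorem cnat_self (hd : CartanData d) (i : I) : cnat d i i = 0 := by
  simp [cnat, hd.cc_self]

theorem cnat_eq_neg_cc (hd : CartanData d) {i j : I} (hij : i ≠ j) :
    (cnat d i j : ℤ) = -cc d i j := by
  have hneg : 0 ≤ -cc d i j := by
    nlinarith [hd.cc_mul i j, hd.offdiag i j hij, hd.pos i]
  rw [cnat, Int.toNat_of_nonneg hneg]

theorem cnat_mul (hd : CartanData d) {i j : I} (hij : i ≠ j) :
    (cnat d i j : ℤ) * d i i = -2 * d i j := by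
  rw [hd.cnat_eq_neg_cc hij]
  linarith [hd.cc_mul i j]

theorem cnat_mul_comm (hd : CartanData d) {i j : I} (hij : i ≠ j) :
    (cnat d i j : ℤ) * d i i = cnat d j i * d j j := by
  rw [hd.cnat_mul hij, hd.cnat_mul hij.symm, hd.symm]

theorem cnat_eq_zero_comm (hd : CartanData d) {i j : I} (hij : i ≠ j) (h : cnat d i j = 0) :
    cnat d j i = 0 := by
  have := hd.cnat_mul_comm hij
  rw [h, Nat.cast_zero, zero_mul, zero_eq_mul] at this
  exact_mod_cast this.resolve_right (hd.pos j).ne'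

theorem dl_mul_cc (hd : CartanData d) (i j : I) : dl d i * cc d i j = d i j := by
  have h : 2 * (dl d i * cc d i j) = 2 * d i j := by
    rw [← hd.cc_mul, ← hd.two_mul_dl]; ring
  omega

theorem dl_mul_cc_comm (hd : CartanData d) (i j : I) :
    dl d i * cc d i j = dl d j * cc d j i := by
  rw [hd.dl_mul_cc, hd.dl_mul_cc, hd.symm]

end CartanData

theorem lpow_eq_pow {M : Type} [AddCommGroup M] [Module ℂ M] (f : M →ₗ[ℂ] M) (n : ℕ) :
    lpow f n = f ^ n := by
  induction n with
  | zero => rfl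
  | succ n ih => rw [pow_succ', ← ih]; rfl

section Reflection

variable {I : Type} {d : I → I → ℤ}
  {Vt : I → Type} [∀ i, AddCommGroup (Vt i)] [∀ i, Module ℂ (Vt i)]
  {Wt : I → Type} [∀ i, AddCommGroup (Wt i)] [∀ i, Module ℂ (Wt i)]
  {x : ∀ j i : I, Vt i →ₗ[ℂ] Vt j} {A : ∀ i, Wt i →ₗ[ℂ] Vt i} {B : ∀ i, Vt i →ₗ[ℂ] Wt i}
  {i : I}

theorem Psi_apply (u : Vt i) :
    Psi d Vt Wt x B i u =
      (B i u, fun j (k : Fin (cnat d i j)) => x j i ((x i i ^ (cnat d i j - 1 - k)) u)) := by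
  simp [Psi, lpow_eq_pow]
  rfl

theorem Ups_apply_fst (p : Wt i × ((j : I) → Fin (cnat d i j) → Vt j)) :
    (Ups d Vt Wt x i p).1 = 0 :=
  rfl

theorem Ups_apply_snd_of_eq_zero (p : Wt i × ((j : I) → Fin (cnat d i j) → Vt j)) {j : I}
    (k : Fin (cnat d i j)) (hk : (k : ℕ) = 0) :
    (Ups d Vt Wt x i p).2 j k = -(x j j ^ cnat d j i) (p.2 j ⟨cnat d i j - 1, by omega⟩) := by
  simp [Ups, hk, lpow_eq_pow]

theorem Ups_apply_snd_of_ne_zero (p : Wt i × ((j : I) → Fin (cnat d i j) → Vt j)) {j : I}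
    (k : Fin (cnat d i j)) (hk : (k : ℕ) ≠ 0) :
    (Ups d Vt Wt x i p).2 j k = p.2 j ⟨k - 1, by omega⟩ := by
  simp [Ups, hk]

theorem prj_apply {j : I} (h : 0 < cnat d i j) (p : Wt i × ((j : I) → Fin (cnat d i j) → Vt j)) :
    prj d Vt Wt i j p = p.2 j ⟨cnat d i j - 1, by omega⟩ := by
  simp [prj, h]

theorem x_eq_zero_of_cnat_eq_zero
    (hR1 : ∀ i j, i ≠ j →
      lpow (x j j) (cnat d j i) ∘ₗ x j i + x j i ∘ₗ lpow (x i i) (cnat d i j) = 0)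
    {j : I} (hij : i ≠ j) (h : cnat d i j = 0) (h' : cnat d j i = 0) : x j i = 0 := by
  ext u
  have := LinearMap.congr_fun (hR1 i j hij) u
  simp only [h, h', lpow, LinearMap.id_comp, LinearMap.comp_id,
    LinearMap.zero_apply, ← two_smul ℂ] at this
  exact (smul_eq_zero.1 this).resolve_left two_ne_zero

theorem Psi_x_self (hii : cnat d i i = 0)
    (hR1 : ∀ i j, i ≠ j →
      lpow (x j j) (cnat d j i) ∘ₗ x j i + x j i ∘ₗ lpow (x i i) (cnat d i j) = 0)
    (hR4 : B i ∘ₗ x i i = 0) (u : Vt i) :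
    Psi d Vt Wt x B i (x i i u) = Ups d Vt Wt x i (Psi d Vt Wt x B i u) := by
  refine Prod.ext (by simpa [Psi_apply, Ups_apply_fst] using LinearMap.congr_fun hR4 u) ?_
  funext j k
  obtain rfl | hj := eq_or_ne j i
  · exact (hii ▸ k).elim0
  by_cases hk : (k : ℕ) = 0
  · have hrel := LinearMap.congr_fun (hR1 i j hj.symm) u
    simp only [lpow_eq_pow, LinearMap.add_apply, LinearMap.comp_apply,
      LinearMap.zero_apply] at hrel
    rw [Ups_apply_snd_of_eq_zero _ k hk, Psi_apply, Psi_apply, eq_neg_iff_add_eq_zero]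
    simpa [hk, ← Module.End.mul_apply, ← pow_succ, Nat.sub_add_cancel k.pos, add_comm]
      using hrel
  · rw [Ups_apply_snd_of_ne_zero _ k hk, Psi_apply, Psi_apply]
    simp only [← Module.End.mul_apply, ← pow_succ]
    congr 3
    omega

theorem Psi_pow_x_self (hii : cnat d i i = 0)
    (hR1 : ∀ i j, i ≠ j →
      lpow (x j j) (cnat d j i) ∘ₗ x j i + x j i ∘ₗ lpow (x i i) (cnat d i j) = 0)
    (hR4 : B i ∘ₗ x i i = 0) (n : ℕ) (u : Vt i) :
    Psi d Vt Wt x B i ((x i i ^ n) u) = (Ups d Vt Wt x i ^ n) (Psi d Vt Wt x B i u) := by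
  induction n with
  | zero => rfl
  | succ n ih => rw [pow_succ', pow_succ', Module.End.mul_apply, Module.End.mul_apply,
      Psi_x_self hii hR1 hR4, ih]

theorem Ups_pow_apply_snd (p : Wt i × ((j : I) → Fin (cnat d i j) → Vt j)) {j : I}
    (k : Fin (cnat d i j)) {m : ℕ} (hm : m ≤ k) :
    ((Ups d Vt Wt x i ^ m) p).2 j k = p.2 j ⟨k - m, by omega⟩ := by
  induction m generalizing k with
  | zero => rfl
  | succ m ih =>
    rw [pow_succ', Module.End.mul_apply, Ups_apply_snd_of_ne_zero _ k (by omega),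
      ih _ (by simp only; omega)]
    exact congrArg (p.2 j) (Fin.ext (by simp only; omega))

theorem prj_Ups_pow (p : Wt i × ((j : I) → Fin (cnat d i j) → Vt j)) {j : I}
    (k : Fin (cnat d i j)) :
    prj d Vt Wt i j ((Ups d Vt Wt x i ^ (cnat d i j - 1 - k)) p) = p.2 j k := by
  rw [prj_apply k.pos, Ups_pow_apply_snd _ _ (by simp only; omega)]
  exact congrArg (p.2 j) (Fin.ext (by simp only; omega))

theorem prj_Psi {j : I} (hx : cnat d i j = 0 → x j i = 0) (u : Vt i) :
    prj d Vt Wt i j (Psi d Vt Wt x B i u) = x j i u := by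
  by_cases h : 0 < cnat d i j
  · simp [prj_apply h, Psi_apply]
  · simp [prj, h, hx (by omega)]

variable [Fintype I]

theorem Phi_apply (p : Wt i × ((j : I) → Fin (cnat d i j) → Vt j)) :
    Phi d Vt Wt x A i p =
      A i p.1 + ∑ j, ∑ k : Fin (cnat d i j), (x i i ^ (k : ℕ)) (x i j (p.2 j k)) := by
  simp [Phi, LinearMap.sum_apply, lpow_eq_pow]

theorem Phi_Ups (hii : cnat d i i = 0)
    (hR1 : ∀ i j, i ≠ j →
      lpow (x j j) (cnat d j i) ∘ₗ x j i + x j i ∘ₗ lpow (x i i) (cnat d i j) = 0)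
    (hR3 : x i i ∘ₗ A i = 0) (p : Wt i × ((j : I) → Fin (cnat d i j) → Vt j)) :
    Phi d Vt Wt x A i (Ups d Vt Wt x i p) = x i i (Phi d Vt Wt x A i p) := by
  have hA : x i i (A i p.1) = 0 := LinearMap.congr_fun hR3 p.1
  rw [Phi_apply, Phi_apply, Ups_apply_fst, map_zero, zero_add, map_add, map_sum, hA, zero_add]
  refine Finset.sum_congr rfl fun j _ => ?_
  obtain rfl | hj := eq_or_ne j i
  · have : IsEmpty (Fin (cnat d j j)) := by rw [hii]; infer_instance
    simp
  · exact Module.End.sum_pow_apply_rotate _ _ _ (by simpa [lpow_eq_pow] using hR1 j i hj) _ _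
      (fun k hk => Ups_apply_snd_of_eq_zero _ k hk) (fun k hk => Ups_apply_snd_of_ne_zero _ k hk)

end Reflection

section Grading

variable {I : Type} {d : I → I → ℤ}
  {Vt : I → Type} [∀ i, AddCommGroup (Vt i)] [∀ i, Module ℂ (Vt i)]
  {Wt : I → Type} [∀ i, AddCommGroup (Wt i)] [∀ i, Module ℂ (Wt i)]
  {Vg : ∀ i : I, ℤ → Submodule ℂ (Vt i)} {Wg : ∀ i : I, ℤ → Submodule ℂ (Wt i)}
  {x : ∀ j i : I, Vt i →ₗ[ℂ] Vt j} {A : ∀ i, Wt i →ₗ[ℂ] Vt i} {B : ∀ i, Vt i →ₗ[ℂ] Wt i}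
  {i : I} {Uo : ∀ j : I, ℤ → Submodule ℂ (Vt j)}
  {Ui : ℤ → Submodule ℂ (Wt i × ((j : I) → Fin (cnat d i j) → Vt j))}

theorem mem_Dg {G : ∀ j : I, ℤ → Submodule ℂ (Vt j)} {a : ℤ}
    {p : Wt i × ((j : I) → Fin (cnat d i j) → Vt j)} :
    p ∈ Dg d Vt Wt G Wg i a ↔ p.1 ∈ Wg i (a + dl d i) ∧
      ∀ j (k : Fin (cnat d i j)), p.2 j k ∈ G j (a + d i j + ((k : ℤ) + 1) * d i i) := by
  simp [Dg, Submodule.mem_prod, Submodule.mem_pi]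

theorem Dg_mono (hii : cnat d i i = 0) {G G' : ∀ j : I, ℤ → Submodule ℂ (Vt j)}
    (h : ∀ j, j ≠ i → ∀ a, G j a ≤ G' j a) (a : ℤ) :
    Dg d Vt Wt G Wg i a ≤ Dg d Vt Wt G' Wg i a := by
  intro p hp
  rw [mem_Dg] at hp ⊢
  refine ⟨hp.1, fun j k => ?_⟩
  obtain rfl | hj := eq_or_ne j i
  · exact (hii ▸ k).elim0
  · exact h j hj _ (hp.2 j k)

theorem Ups_mem_Dg (hd : CartanData d) {G : ∀ j : I, ℤ → Submodule ℂ (Vt j)}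
    (hG : ∀ j, j ≠ i → ∀ a, (G j a).map (x j j) ≤ G j (a - d j j)) {a : ℤ}
    {p : Wt i × ((j : I) → Fin (cnat d i j) → Vt j)} (hp : p ∈ Dg d Vt Wt G Wg i a) :
    Ups d Vt Wt x i p ∈ Dg d Vt Wt G Wg i (a - d i i) := by
  rw [mem_Dg] at hp ⊢
  refine ⟨by simp [Ups_apply_fst], fun j k => ?_⟩
  obtain rfl | hj := eq_or_ne j i
  · exact (hd.cnat_self j ▸ k).elim0
  by_cases hk : (k : ℕ) = 0
  · rw [Ups_apply_snd_of_eq_zero _ k hk]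
    refine Submodule.neg_mem _ ?_
    convert Module.End.pow_apply_mem_of_map_le (hG j hj) (cnat d j i) (hp.2 j _) using 2
    have hN : ((cnat d i j - 1 : ℕ) : ℤ) + 1 = cnat d i j := by have := k.pos; omega
    rw [hk, hN, ← hd.cnat_mul_comm hj.symm]
    push_cast
    ring
  · rw [Ups_apply_snd_of_ne_zero _ k hk]
    convert hp.2 j _ using 2
    have hk' : (((k : ℕ) - 1 : ℕ) : ℤ) = (k : ℤ) - 1 := by omega
    rw [hk']
    ring

variable [Fintype I]

theorem Ui_le_Dg (hd : CartanData d) (hbar : BarSubrep d Vt Wt Vg Wg x A B i Uo Ui) (a : ℤ) :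
    Ui a ≤ Dg d Vt Wt Uo Wg i a := by
  obtain ⟨hUiD, -, -, hprj, -, hUps⟩ := hbar
  intro u hu
  rw [mem_Dg]
  refine ⟨(mem_Dg.1 (hUiD a hu).1).1, fun j k => ?_⟩
  obtain rfl | hj := eq_or_ne j i
  · exact (hd.cnat_self j ▸ k).elim0
  rw [← prj_Ups_pow (x := x) u k]
  convert hprj j hj _ (Submodule.mem_map_of_mem
    (Module.End.pow_apply_mem_of_map_le hUps (cnat d i j - 1 - k) hu)) using 2
  have hN : ((cnat d i j - 1 - k : ℕ) : ℤ) = cnat d i j - 1 - k := by have := k.isLt; omega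
  rw [hN]
  linear_combination hd.cnat_mul hj.symm

theorem Phi_mem_Vg (hd : CartanData d)
    (hxg : ∀ j i a, (Vg i a).map (x j i) ≤ Vg j (a - d i j))
    (hAg : ∀ i a, (Wg i a).map (A i) ≤ Vg i (a + dl d i)) {a : ℤ}
    {p : Wt i × ((j : I) → Fin (cnat d i j) → Vt j)} (hp : p ∈ Dg d Vt Wt Vg Wg i a) :
    Phi d Vt Wt x A i p ∈ Vg i (a + d i i) := by
  rw [mem_Dg] at hp
  rw [Phi_apply]
  refine Submodule.add_mem _ ?_ (Submodule.sum_mem _ fun j _ => Submodule.sum_mem _ fun k _ => ?_)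
  · convert hAg i _ (Submodule.mem_map_of_mem hp.1) using 2
    linarith [hd.two_mul_dl i]
  · convert Module.End.pow_apply_mem_of_map_le (hxg i i) k
      (hxg i j _ (Submodule.mem_map_of_mem (hp.2 j k))) using 2
    rw [hd.symm j i]
    ring

theorem Psi_Phi_mem (hd : CartanData d)
    (hR1 : ∀ i j, i ≠ j →
      lpow (x j j) (cnat d j i) ∘ₗ x j i + x j i ∘ₗ lpow (x i i) (cnat d i j) = 0)
    (hR4 : B i ∘ₗ x i i = 0) (hbar : BarSubrep d Vt Wt Vg Wg x A B i Uo Ui)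
    (hImAi : ∀ a, (Wg i a).map (Psi d Vt Wt x B i ∘ₗ A i) ≤ Ui (a + dl d i)) {a : ℤ}
    {p : Wt i × ((j : I) → Fin (cnat d i j) → Vt j)} (hp : p ∈ Dg d Vt Wt Uo Wg i a) :
    Psi d Vt Wt x B i (Phi d Vt Wt x A i p) ∈ Ui (a + d i i) := by
  obtain ⟨-, -, -, -, hPsix, hUps⟩ := hbar
  rw [mem_Dg] at hp
  rw [Phi_apply, map_add, map_sum]
  refine Submodule.add_mem _ ?_ (Submodule.sum_mem _ fun j _ => ?_)
  · have hA : Psi d Vt Wt x B i (A i p.1) ∈ Ui (a + dl d i + dl d i) :=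
      hImAi _ (Submodule.mem_map_of_mem hp.1)
    convert hA using 2
    linarith [hd.two_mul_dl i]
  rw [map_sum]
  refine Submodule.sum_mem _ fun k _ => ?_
  obtain rfl | hj := eq_or_ne j i
  · exact (hd.cnat_self j ▸ k).elim0
  rw [Psi_pow_x_self (hd.cnat_self i) hR1 hR4]
  have hk : Psi d Vt Wt x B i (x i j (p.2 j k)) ∈ Ui (a + ((k : ℤ) + 1) * d i i) :=
    hPsix j hj _ (Submodule.mem_map_of_mem (by convert hp.2 j k using 2; ring))
  convert Module.End.pow_apply_mem_of_map_le hUps k hk using 2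
  ring

theorem A_mem_map_Phi (hd : CartanData d) (a : ℤ) :
    (Wg i a).map (A i) ≤ (Dg d Vt Wt Uo Wg i (a + dl d i - d i i)).map (Phi d Vt Wt x A i) := by
  rintro _ ⟨w, hw, rfl⟩
  refine ⟨(w, 0), mem_Dg.2 ⟨?_, fun j k => Submodule.zero_mem _⟩, by simp [Phi_apply]⟩
  convert (show w ∈ Wg i a from hw) using 2
  linarith [hd.two_mul_dl i]

theorem x_mem_map_Phi [DecidableEq I] (hd : CartanData d) {j : I} (hj : j ≠ i)
    (hx : cnat d i j = 0 → x i j = 0) {a : ℤ} {u : Vt j} (hu : u ∈ Uo j a) :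
    x i j u ∈ (Dg d Vt Wt Uo Wg i (a - d j i - d i i)).map (Phi d Vt Wt x A i) := by
  by_cases h : cnat d i j = 0
  · simp [hx h]
  set k₀ : Fin (cnat d i j) := ⟨0, by omega⟩
  refine ⟨(0, Pi.single j (Pi.single k₀ u)), mem_Dg.2 ⟨Submodule.zero_mem _, fun j' k => ?_⟩, ?_⟩
  · obtain rfl | hj' := eq_or_ne j' j
    · obtain rfl | hk := eq_or_ne k k₀
      · simp only [Pi.single_eq_same]
        convert hu using 2
        simp only [k₀, hd.symm j' i, Nat.cast_zero]
        ring
      · simp [Pi.single_eq_of_ne hk]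
    · simp [Pi.single_eq_of_ne hj']
  · rw [Phi_apply, Finset.sum_eq_single j (fun j' _ hj' => by simp [Pi.single_eq_of_ne hj'])
      (by simp), Finset.sum_eq_single k₀ (fun k _ hk => by simp [Pi.single_eq_of_ne hk])
      (by simp)]
    simp [k₀]

theorem finrank_Dg_le [∀ j, FiniteDimensional ℂ (Vt j)] [FiniteDimensional ℂ (Wt i)]
    (G : ∀ j : I, ℤ → Submodule ℂ (Vt j)) (a : ℤ) :
    Module.finrank ℂ (Dg d Vt Wt G Wg i a) ≤ Module.finrank ℂ (Wg i (a + dl d i)) +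
      ∑ j, ∑ k : Fin (cnat d i j),
        Module.finrank ℂ (G j (a + d i j + ((k : ℤ) + 1) * d i i)) := by
  let Θ : (Wg i (a + dl d i) × ((j : I) → (k : Fin (cnat d i j)) →
      G j (a + d i j + ((k : ℤ) + 1) * d i i))) →ₗ[ℂ]
      (Wt i × ((j : I) → Fin (cnat d i j) → Vt j)) :=
    (Wg i _).subtype.prodMap
      (LinearMap.pi fun j => LinearMap.pi fun k => (G j _).subtype ∘ₗ
        LinearMap.proj k ∘ₗ LinearMap.proj j)
  have hΘ : Dg d Vt Wt G Wg i a ≤ LinearMap.range Θ := fun p hp => by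
    rw [mem_Dg] at hp
    exact ⟨(⟨p.1, hp.1⟩, fun j k => ⟨p.2 j k, hp.2 j k⟩), rfl⟩
  calc Module.finrank ℂ (Dg d Vt Wt G Wg i a) ≤ Module.finrank ℂ (LinearMap.range Θ) :=
        Submodule.finrank_mono hΘ
    _ ≤ _ := LinearMap.finrank_range_le Θ
    _ = _ := by simp [Module.finrank_prod, Module.finrank_pi_fintype]

end Grading

section Extension

variable {I : Type} [Fintype I] [DecidableEq I] {d : I → I → ℤ}
  {Vt : I → Type} [∀ i, AddCommGroup (Vt i)] [∀ i, Module ℂ (Vt i)]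
  {Wt : I → Type} [∀ i, AddCommGroup (Wt i)] [∀ i, Module ℂ (Wt i)]
  {Vg : ∀ i : I, ℤ → Submodule ℂ (Vt i)} {Wg : ∀ i : I, ℤ → Submodule ℂ (Wt i)}
  {x : ∀ j i : I, Vt i →ₗ[ℂ] Vt j} {A : ∀ i, Wt i →ₗ[ℂ] Vt i} {B : ∀ i, Vt i →ₗ[ℂ] Wt i}
  {i : I} {Uo : ∀ j : I, ℤ → Submodule ℂ (Vt j)}
  {Ui : ℤ → Submodule ℂ (Wt i × ((j : I) → Fin (cnat d i j) → Vt j))}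
  {U : ∀ j : I, ℤ → Submodule ℂ (Vt j)}

theorem isSubrep_of_barSubrep (hd : CartanData d)
    (hxg : ∀ j i a, (Vg i a).map (x j i) ≤ Vg j (a - d i j))
    (hAg : ∀ i a, (Wg i a).map (A i) ≤ Vg i (a + dl d i))
    (hR1 : ∀ i j, i ≠ j →
      lpow (x j j) (cnat d j i) ∘ₗ x j i + x j i ∘ₗ lpow (x i i) (cnat d i j) = 0)
    (hR3 : x i i ∘ₗ A i = 0) (hR4 : B i ∘ₗ x i i = 0)
    (hbar : BarSubrep d Vt Wt Vg Wg x A B i Uo Ui)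
    (hImAi : ∀ a, (Wg i a).map (Psi d Vt Wt x B i ∘ₗ A i) ≤ Ui (a + dl d i))
    (hUo : ∀ j, j ≠ i → U j = Uo j)
    (hUi : ∀ b, U i b = (Dg d Vt Wt Uo Wg i (b - d i i)).map (Phi d Vt Wt x A i)) :
    IsSubrep d Vt Vg x U := by
  have hx : ∀ j, j ≠ i → cnat d i j = 0 → x j i = 0 ∧ x i j = 0 := fun j hj h =>
    ⟨x_eq_zero_of_cnat_eq_zero hR1 hj.symm h (hd.cnat_eq_zero_comm hj.symm h),
      x_eq_zero_of_cnat_eq_zero hR1 hj (hd.cnat_eq_zero_comm hj.symm h) h⟩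
  have hUoVg := hbar.2.1
  have hUox := hbar.2.2.1
  refine ⟨fun j a => ?_, fun j' j a => ?_⟩
  · obtain rfl | hj := eq_or_ne i j
    · rw [hUi]
      rintro _ ⟨p, hp, rfl⟩
      convert Phi_mem_Vg hd hxg hAg (Dg_mono (hd.cnat_self i) hUoVg _ hp) using 2
      ring
    · rw [hUo j hj.symm]
      exact hUoVg j hj.symm a
  obtain rfl | hj := eq_or_ne i j <;> obtain rfl | hj' := eq_or_ne i j'
  · rw [hUi, hUi]
    rintro _ ⟨_, ⟨p, hp, rfl⟩, rfl⟩
    exact ⟨_, Ups_mem_Dg hd (fun k hk => hUox k k hk hk) hp, Phi_Ups (hd.cnat_self i) hR1 hR3 p⟩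
  · replace hj' := hj'.symm
    rw [hUi, hUo j' hj']
    rintro _ ⟨_, ⟨p, hp, rfl⟩, rfl⟩
    rw [← prj_Psi (B := B) (fun h => (hx j' hj' h).1)]
    convert hbar.2.2.2.1 j' hj' _
      (Submodule.mem_map_of_mem (Psi_Phi_mem hd hR1 hR4 hbar hImAi hp)) using 2
    ring
  · rw [hUo j hj.symm, hUi]
    rintro _ ⟨u, hu, rfl⟩
    exact x_mem_map_Phi hd hj.symm (fun h => (hx j hj.symm h).2) hu
  · rw [hUo j hj.symm, hUo j' hj'.symm]
    exact hUox j' j hj'.symm hj.symm a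

theorem dimbar_add_dimv_le [∀ j, FiniteDimensional ℂ (Vt j)] [∀ j, FiniteDimensional ℂ (Wt j)]
    (hd : CartanData d) {w : I → ℤ → ℕ} (hwdim : ∀ a, Module.finrank ℂ (Wg i a) = w i a)
    (hbar : BarSubrep d Vt Wt Vg Wg x A B i Uo Ui)
    (hUi : ∀ b, U i b = (Dg d Vt Wt Uo Wg i (b - d i i)).map (Phi d Vt Wt x A i)) (a : ℤ) :
    dimbar d Vt Wt i Uo Ui i a + dimv Vt U i (a + d i i) ≤ w i (a + dl d i) +
      ∑ j ∈ univ.erase i, ∑ k ∈ range (cnat d i j),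
        dimbar d Vt Wt i Uo Ui j (a + d i j + ((k : ℤ) + 1) * d i i) := by
  have hdim : Module.finrank ℂ (Ui a) + Module.finrank ℂ (U i (a + d i i)) ≤
      Module.finrank ℂ (Wg i (a + dl d i)) + ∑ j, ∑ k : Fin (cnat d i j),
        Module.finrank ℂ (Uo j (a + d i j + ((k : ℤ) + 1) * d i i)) := by
    rw [hUi, add_sub_cancel_right]
    exact (Submodule.finrank_add_finrank_map_le _ (Ui_le_Dg hd hbar a)
      fun u hu => (hbar.1 a hu).2).trans (finrank_Dg_le Uo a)
  have : IsEmpty (Fin (cnat d i i)) := by rw [hd.cnat_self]; infer_instance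
  rw [hwdim, ← sum_erase univ (a := i) (Fintype.sum_empty _)] at hdim
  simp only [dimbar, dimv, ↓reduceIte]
  rw [sum_congr rfl fun j hj => sum_congr rfl fun k _ => if_neg (ne_of_mem_erase hj)]
  rw [sum_congr rfl fun j _ => Fin.sum_univ_eq_sum_range
    (fun k => Module.finrank ℂ (Uo j (a + d i j + ((k : ℤ) + 1) * d i i))) _] at hdim
  exact_mod_cast hdim

end Extension

section Numerics

variable {I : Type} [Fintype I] {d : I → I → ℤ}

theorem pairθ_eq_sum (θ : I → ℝ) (u : I → ℤ → ℤ) :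
    pairθ d θ u = ∑ j, (dl d j : ℝ) * θ j * ((∑ᶠ a, u j a : ℤ) : ℝ) := by
  refine Finset.sum_congr rfl fun j _ => ?_
  exact congrArg _ ((Int.castAddHom ℝ).map_finsum_of_injective Int.cast_injective _).symm

variable [DecidableEq I]

theorem hasFiniteSupport_SS {w : I → ℤ → ℕ} {i : I} {n : I → ℤ → ℤ}
    (hw : HasFiniteSupport (w i)) (hn : ∀ j, HasFiniteSupport (n j)) (j : I) :
    HasFiniteSupport (SS d w i n j) := by
  unfold SS
  split_ifs with hj
  · simp only [add_assoc]
    exact (((hw.fun_comp (g := Nat.cast) Nat.cast_zero).comp_add_const _).add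
      (HasFiniteSupport.sum (fun j => HasFiniteSupport.sum
        (fun k => (hn j).comp_add_const _) _) _)).sub ((hn i).comp_add_const _)
  · exact hn j

theorem finsum_SS_self (w : I → ℤ → ℕ) (i : I) {n : I → ℤ → ℤ}
    (hw : HasFiniteSupport (w i)) (hn : ∀ j, HasFiniteSupport (n j)) :
    ∑ᶠ a, SS d w i n i a = ∑ᶠ a, (w i a : ℤ) + ∑ j ∈ univ.erase i, (cnat d i j : ℤ) *
      ∑ᶠ a, n j a - ∑ᶠ a, n i a := by
  have hw' : HasFiniteSupport fun a => (w i (a + dl d i) : ℤ) :=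
    (hw.fun_comp (g := Nat.cast) Nat.cast_zero).comp_add_const _
  have hsum : HasFiniteSupport fun a => ∑ j ∈ univ.erase i, ∑ k ∈ range (cnat d i j),
      n j (a + (d i j + ((k : ℤ) + 1) * d i i)) :=
    HasFiniteSupport.sum (fun j => HasFiniteSupport.sum
      (fun k => (hn j).comp_add_const _) _) _
  simp only [SS, ↓reduceIte, add_assoc]
  rw [finsum_sub_distrib ?_ ((hn i).comp_add_const _), finsum_add_distrib hw' hsum,
    finsum_sum_sum_comp_add _ _ (fun j k => d i j + ((k : ℤ) + 1) * d i i) (fun j _ => hn j),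
    finsum_comp_add_const (fun a => (w i a : ℤ)), finsum_comp_add_const (n i)]
  exact hw'.add hsum

theorem finsum_add_finsum_le_of_le {i : I} {w : I → ℤ → ℕ} {u ū : I → ℤ → ℤ}
    (hw : HasFiniteSupport (w i)) (hū : ∀ j, HasFiniteSupport (ū j))
    (hu : HasFiniteSupport (u i))
    (hkey : ∀ a, ū i a + u i (a + d i i) ≤ w i (a + dl d i) + ∑ j ∈ univ.erase i,
      ∑ k ∈ range (cnat d i j), ū j (a + d i j + ((k : ℤ) + 1) * d i i)) :
    ∑ᶠ a, ū i a + ∑ᶠ a, u i a ≤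
      ∑ᶠ a, (w i a : ℤ) + ∑ j ∈ univ.erase i, (cnat d i j : ℤ) * ∑ᶠ a, ū j a := by
  have hw' : HasFiniteSupport fun a => (w i (a + dl d i) : ℤ) :=
    (hw.fun_comp (g := Nat.cast) Nat.cast_zero).comp_add_const _
  have hsum : HasFiniteSupport fun a => ∑ j ∈ univ.erase i, ∑ k ∈ range (cnat d i j),
      ū j (a + (d i j + ((k : ℤ) + 1) * d i i)) :=
    HasFiniteSupport.sum (fun j => HasFiniteSupport.sum (fun k => (hū j).comp_add_const _) _) _
  simp only [add_assoc] at hkey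
  calc ∑ᶠ a, ū i a + ∑ᶠ a, u i a = ∑ᶠ a, (ū i a + u i (a + d i i)) := by
        rw [finsum_add_distrib (hū i) (hu.comp_add_const _), finsum_comp_add_const]
    _ ≤ ∑ᶠ a, ((w i (a + dl d i) : ℤ) + ∑ j ∈ univ.erase i, ∑ k ∈ range (cnat d i j),
          ū j (a + (d i j + ((k : ℤ) + 1) * d i i))) :=
        finsum_le_finsum' ((hū i).add (hu.comp_add_const _)) (hw'.add hsum) hkey
    _ = _ := by
        rw [finsum_add_distrib hw' hsum, finsum_comp_add_const (fun a => (w i a : ℤ)),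
          finsum_sum_sum_comp_add _ _ (fun j k => d i j + ((k : ℤ) + 1) * d i i)
            fun j _ => hū j]

theorem pairθ_sref_SS_sub_pairθ (hd : CartanData d) {i : I} (θ : I → ℝ) {v w : I → ℤ → ℕ}
    {u ū : I → ℤ → ℤ} (hv : ∀ j, HasFiniteSupport (v j)) (hw : HasFiniteSupport (w i))
    (hū : ∀ j, HasFiniteSupport (ū j)) (hu : HasFiniteSupport (u i))
    (huū : ∀ j, j ≠ i → u j = ū j) :
    pairθ d (sref d i θ) (fun j a => SS d w i (fun j' b => (v j' b : ℤ)) j a - ū j a) -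
      pairθ d θ (fun j a => (v j a : ℤ) - u j a) =
      -(dl d i * θ i) * ((∑ᶠ a, (w i a : ℤ) + ∑ j ∈ univ.erase i, (cnat d i j : ℤ) *
        ∑ᶠ a, ū j a - ∑ᶠ a, ū i a - ∑ᶠ a, u i a : ℤ) : ℝ) := by
  have hv' : ∀ j, HasFiniteSupport fun a => (v j a : ℤ) :=
    fun j => (hv j).fun_comp (g := Nat.cast) Nat.cast_zero
  have hSS := hasFiniteSupport_SS (d := d) hw hv'
  have hterm : ∀ j ∈ univ.erase i,
      dl d j * sref d i θ j * ((∑ᶠ a, (SS d w i (fun j' b => (v j' b : ℤ)) j a - ū j a) : ℤ) : ℝ) -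
        dl d j * θ j * ((∑ᶠ a, ((v j a : ℤ) - u j a) : ℤ) : ℝ) =
      dl d i * θ i * ((cnat d i j * ∑ᶠ a, (v j a : ℤ) - cnat d i j * ∑ᶠ a, ū j a : ℤ) : ℝ) := by
    intro j hj
    have hji := ne_of_mem_erase hj
    have hsymm : (dl d j : ℝ) * cc d j i = -(dl d i * cnat d i j) := by
      have : dl d j * cc d j i = -(dl d i * (cnat d i j : ℤ)) := by
        rw [hd.cnat_eq_neg_cc hji.symm, hd.dl_mul_cc_comm j i]; ring
      exact_mod_cast this
    rw [finsum_sub_distrib (hSS j) (hū j), huū j hji, finsum_sub_distrib (hv' j) (hū j)]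
    simp only [SS, if_neg hji, sref]
    push_cast
    linear_combination
      (-θ i * (((∑ᶠ a, (v j a : ℤ) : ℤ) : ℝ) - ((∑ᶠ a, ū j a : ℤ) : ℝ))) * hsymm
  rw [pairθ_eq_sum, pairθ_eq_sum, ← add_sum_erase _ _ (mem_univ i),
    ← add_sum_erase _ _ (mem_univ i), add_sub_add_comm, ← sum_sub_distrib, sum_congr rfl hterm,
    ← mul_sum, ← Int.cast_sum, sum_sub_distrib, finsum_sub_distrib (hSS i) (hū i),
    finsum_sub_distrib (hv' i) hu, finsum_SS_self w i hw hv']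
  simp only [sref, hd.cc_self]
  push_cast
  ring

theorem pairθ_sub_le_pairθ_sref_SS (hd : CartanData d) {i : I} {θ : I → ℝ} (hθ : θ i < 0)
    {v w : I → ℤ → ℕ} {u ū : I → ℤ → ℤ}
    (hv : ∀ j, HasFiniteSupport (v j)) (hw : HasFiniteSupport (w i))
    (hū : ∀ j, j ≠ i → HasFiniteSupport (ū j)) (hu₀ : ∀ a, 0 ≤ u i a) (hū₀ : ∀ a, 0 ≤ ū i a)
    (huū : ∀ j, j ≠ i → u j = ū j)
    (hkey : ∀ a, ū i a + u i (a + d i i) ≤ w i (a + dl d i) + ∑ j ∈ univ.erase i,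
      ∑ k ∈ range (cnat d i j), ū j (a + d i j + ((k : ℤ) + 1) * d i i)) :
    pairθ d θ (fun j a => (v j a : ℤ) - u j a) ≤
      pairθ d (sref d i θ) (fun j a => SS d w i (fun j' b => (v j' b : ℤ)) j a - ū j a) := by
  have hR : HasFiniteSupport fun a => (w i (a + dl d i) : ℤ) + ∑ j ∈ univ.erase i,
      ∑ k ∈ range (cnat d i j), ū j (a + d i j + ((k : ℤ) + 1) * d i i) := by
    simp only [add_assoc]
    exact ((hw.fun_comp (g := Nat.cast) Nat.cast_zero).comp_add_const _).add <|
      HasFiniteSupport.finsetSum _ fun j hj => HasFiniteSupport.sum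
        (fun k => (hū j (ne_of_mem_erase hj)).comp_add_const _) _
  have hūi : HasFiniteSupport (ū i) :=
    hR.of_nonneg_of_le hū₀ fun a => by linarith [hkey a, hu₀ (a + d i i)]
  have hū' : ∀ j, HasFiniteSupport (ū j) := fun j => by
    obtain rfl | hj := eq_or_ne j i
    exacts [hūi, hū j hj]
  have hui : HasFiniteSupport (u i) := by
    simpa using (hR.of_nonneg_of_le (fun a => hu₀ (a + d i i))
      fun a => by linarith [hkey a, hū₀ a]).comp_add_const (-d i i)
  have hslack : (0 : ℝ) ≤ ((∑ᶠ a, (w i a : ℤ) + ∑ j ∈ univ.erase i, (cnat d i j : ℤ) *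
      ∑ᶠ a, ū j a - ∑ᶠ a, ū i a - ∑ᶠ a, u i a : ℤ) : ℝ) := by
    have := finsum_add_finsum_le_of_le hw hū' hui hkey
    exact_mod_cast (by omega : (0 : ℤ) ≤ _)
  have hpos : 0 ≤ -(dl d i * θ i) := by
    nlinarith [(Int.cast_pos.2 (hd.dl_pos i) : (0 : ℝ) < dl d i)]
  linarith [pairθ_sref_SS_sub_pairθ hd θ hv hw hū' hui huū, mul_nonneg hpos hslack]

end Numerics

end QChar

open QChar in
/-- for a `θ`-stable point with `θ_i < 0` and a subrepresentation `Ū` of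
the reflected collection containing `Im A`, the collection `U` with `U_j = Ū_j` for
`j ≠ i` and `U_i^b = Φ_i^{b-d_{ii}}(W_i^{b-d_i} ⊕ ⨁_{j≠i} ⨁_ℓ Ū_j^{b+(ℓ-1)d_{ii}})` is a
subrepresentation of `V` containing `Im A`, and
`0 ≤ (θ, v − dim U) ≤ (s_i(θ), S_i(v) − dim Ū)`. -/
theorem extremal_qchar_stmt8 {I : Type} [Fintype I] [DecidableEq I]
    (d : I → I → ℤ) (v w : I → ℤ → ℕ)
    (Vt : I → Type) [∀ i, AddCommGroup (Vt i)] [∀ i, Module ℂ (Vt i)]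
    (Wt : I → Type) [∀ i, AddCommGroup (Wt i)] [∀ i, Module ℂ (Wt i)]
    (Vg : ∀ i : I, ℤ → Submodule ℂ (Vt i)) (Wg : ∀ i : I, ℤ → Submodule ℂ (Wt i))
    (x : ∀ j i : I, Vt i →ₗ[ℂ] Vt j) (A : ∀ i : I, Wt i →ₗ[ℂ] Vt i)
    (B : ∀ i : I, Vt i →ₗ[ℂ] Wt i)
    (hd : QChar.CartanData d)
    (hv : (Function.support fun p : I × ℤ => v p.1 p.2).Finite)
    (hw : (Function.support fun p : I × ℤ => w p.1 p.2).Finite)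
    (hrep : QChar.IsRep d v w Vt Wt Vg Wg x A B)
    (i : I) (θ : I → ℝ) (hθi : θ i < 0)
    (hstab : QChar.IsStable d v Vt Wt Vg Wg x A B θ)
    (Uo : ∀ j : I, ℤ → Submodule ℂ (Vt j))
    (Ui : ℤ → Submodule ℂ (Wt i × ((j : I) → Fin (QChar.cnat d i j) → Vt j)))
    (hbar : QChar.BarSubrep d Vt Wt Vg Wg x A B i Uo Ui)
    (hImA : ∀ j : I, j ≠ i → ∀ a, (Wg j a).map (A j) ≤ Uo j (a + QChar.dl d j))
    (hImAi : ∀ a, (Wg i a).map (QChar.Psi d Vt Wt x B i ∘ₗ A i) ≤ Ui (a + QChar.dl d i))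
    (U : ∀ j : I, ℤ → Submodule ℂ (Vt j))
    (hUo : ∀ j : I, j ≠ i → U j = Uo j)
    (hUi : ∀ b : ℤ, U i b =
      ((Wg i ((b - d i i) + QChar.dl d i)).prod
        (Submodule.pi Set.univ fun j => Submodule.pi Set.univ
          fun k : Fin (QChar.cnat d i j) =>
            Uo j ((b - d i i) + d i j + ((k : ℤ) + 1) * d i i))).map
        (QChar.Phi d Vt Wt x A i)) :
    QChar.IsSubrep d Vt Vg x U ∧
    (∀ j a, (Wg j a).map (A j) ≤ U j (a + QChar.dl d j)) ∧
    0 ≤ QChar.pairθ d θ (fun j a => (v j a : ℤ) - QChar.dimv Vt U j a) ∧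
    QChar.pairθ d θ (fun j a => (v j a : ℤ) - QChar.dimv Vt U j a)
      ≤ QChar.pairθ d (QChar.sref d i θ)
          (fun j a => QChar.SS d w i (fun j' b => (v j' b : ℤ)) j a
            - QChar.dimbar d Vt Wt i Uo Ui j a) := by
  obtain ⟨hVfin, hWfin, -, -, hvdim, hwdim, hxg, hAg, -, hR1, -, hR3, hR4⟩ := hrep
  -- the domain in `hUi` is `Dg` with `Ū` in place of `V`
  have hUi' : ∀ b, U i b = (Dg d Vt Wt Uo Wg i (b - d i i)).map (Phi d Vt Wt x A i) := hUi
  have hsub := isSubrep_of_barSubrep hd hxg hAg hR1 (hR3 i) (hR4 i) hbar hImAi hUo hUi'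
  have hImAU : ∀ j a, (Wg j a).map (A j) ≤ U j (a + dl d j) := by
    intro j a
    obtain rfl | hj := eq_or_ne i j
    · rw [hUi']
      exact A_mem_map_Phi hd a
    · rw [hUo j hj.symm]
      exact hImA j hj.symm a
  refine ⟨hsub, hImAU, hstab.2 U hsub hImAU, ?_⟩
  have hvj : ∀ j, HasFiniteSupport (v j) := fun j => hv.preimage (Prod.mk_right_injective j).injOn
  refine pairθ_sub_le_pairθ_sref_SS hd hθi hvj (hw.preimage (Prod.mk_right_injective i).injOn)
    (fun j hj => ?_) (fun a => Nat.cast_nonneg _) (fun a => by simp [dimbar]) (fun j hj => ?_)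
    (dimbar_add_dimv_le hd (hwdim i) hbar hUi')
  · refine ((hvj j).fun_comp (g := Nat.cast) Nat.cast_zero).of_nonneg_of_le
      (fun a => by simp only [dimbar, if_neg hj]; positivity) fun a => ?_
    simp only [dimbar, if_neg hj, ← hvdim j a]
    exact_mod_cast Submodule.finrank_mono (hbar.2.1 j hj a)
  · funext a
    simp only [dimv, dimbar, if_neg hj]
    rw [hUo j hj]
end

section
/- Fix i ∈ I, θ ∈ ℝ^I, and finitely supported tuples v, w ∈ ℕ^{I×ℤ}. Then (s_i(θ), S_i(v)) = (θ, v) − d_i·θ_i·w_i, where w_i := Σ_{a∈ℤ} w_i^a; explicitly, Σ_{j∈I} d_j·(s_i(θ))_j·(Σ_{a} S_i(v)_j^a) = − d_i·θ_i·w_i + Σ_{j∈I} d_j·θ_j·(Σ_a v_j^a). -/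
/- Common setup: (graded, generalized) quiver varieties attached to a symmetrized
Cartan matrix, following Neguț, "Extremal monomials of q-characters". -/

open Module LinearMap Finset

open Function

lemma aux_line_fin {I : Type} (v : I → ℤ → ℕ)
    (hv : (Function.support fun p : I × ℤ => v p.1 p.2).Finite) (j : I) :
    (Function.support fun a : ℤ => ((v j a : ℝ))).Finite := by
  have h : (Function.support fun a : ℤ => ((v j a : ℝ)))
      = (fun a : ℤ => (j, a)) ⁻¹' (Function.support fun p : I × ℤ => v p.1 p.2) := by
    ext a; simp [Function.mem_support]
  rw [h]
  exact hv.preimage (fun a _ b _ hab => by simpa using congrArg Prod.snd hab)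

lemma aux_shift_fin {f : ℤ → ℝ} (hf : (Function.support f).Finite) (c : ℤ) :
    (Function.support fun a : ℤ => f (a + c)).Finite := by
  have h : (Function.support fun a : ℤ => f (a + c))
      = (fun a : ℤ => a + c) ⁻¹' Function.support f := rfl
  rw [h]
  exact hf.preimage (add_left_injective c).injOn

lemma aux_shift_finsum (f : ℤ → ℝ) (c : ℤ) : ∑ᶠ a : ℤ, f (a + c) = ∑ᶠ a : ℤ, f a :=
  finsum_comp_equiv (Equiv.addRight c)

lemma aux_key {I : Type} (d : I → I → ℤ) (heven : ∀ i, Even (d i i))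
    (hdvd : ∀ i j, d i i ∣ 2 * d i j) (hpos : ∀ i, 0 < d i i) (j k : I) :
    (d j j / 2) * (2 * d j k / d j j) = d j k := by
  obtain ⟨c, hc⟩ := hdvd j k
  obtain ⟨m, hm⟩ := heven j
  have h2 : d j j = 2 * m := by omega
  have hne : d j j ≠ 0 := (hpos j).ne'
  rw [hc, Int.mul_ediv_cancel_left _ hne]
  have h3 : (2 * m) / 2 = m := by omega
  have h4 : 2 * d j k = 2 * (m * c) := by rw [hc, h2]; ring
  rw [h2, h3]
  omega

open QChar in
/-- `(s_i(θ), S_i(v)) = (θ, v) − d_i θ_i w_i` where `w_i = Σ_a w_i^a`. -/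
theorem extremal_qchar_stmt9 {I : Type} [Fintype I] [DecidableEq I]
    (d : I → I → ℤ) (v w : I → ℤ → ℕ)
    (hd : QChar.CartanData d)
    (hv : (Function.support fun p : I × ℤ => v p.1 p.2).Finite)
    (hw : (Function.support fun p : I × ℤ => w p.1 p.2).Finite)
    (i : I) (θ : I → ℝ) :
    QChar.pairθ d (QChar.sref d i θ) (QChar.SS d w i (fun j a => (v j a : ℤ)))
      = QChar.pairθ d θ (fun j a => (v j a : ℤ))
        - (QChar.dl d i : ℝ) * θ i * ∑ᶠ a : ℤ, (w i a : ℝ) := by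
  classical
  have hvf : ∀ j, (Function.support fun a : ℤ => ((v j a : ℝ))).Finite :=
    aux_line_fin v hv
  have hwf : (Function.support fun a : ℤ => ((w i a : ℝ))).Finite :=
    aux_line_fin w hw i
  set F : I → ℝ := fun j => ∑ᶠ a : ℤ, ((v j a : ℝ)) with hFdef
  set W : ℝ := ∑ᶠ a : ℤ, ((w i a : ℝ)) with hWdef
  have key : ∀ j k : I, (QChar.dl d j : ℝ) * (QChar.cc d j k : ℝ) = (d j k : ℝ) := by
    intro j k
    have := aux_key d hd.even hd.dvd hd.pos j k
    exact_mod_cast congrArg (Int.cast : ℤ → ℝ) this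
  have hccii : QChar.cc d i i = 2 := by
    unfold QChar.cc
    exact Int.mul_ediv_cancel _ (hd.pos i).ne'
  have hcnat : ∀ j, j ≠ i → ((QChar.cnat d i j : ℤ) : ℝ) = -((QChar.cc d i j : ℤ) : ℝ) := by
    intro j hj
    obtain ⟨c, hc⟩ := hd.dvd i j
    have hcc : QChar.cc d i j = c := by
      unfold QChar.cc; rw [hc]; exact Int.mul_ediv_cancel_left _ (hd.pos i).ne'
    have hle : QChar.cc d i j ≤ 0 := by
      rw [hcc]
      nlinarith [hd.pos i, hd.offdiag i j (fun h => hj (h.symm ▸ rfl)), hc]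
    have : ((QChar.cnat d i j : ℤ)) = -(QChar.cc d i j) := by
      unfold QChar.cnat; exact Int.toNat_of_nonneg (by omega)
    push_cast [this]
    ring
  -- the finsum at index i
  have hSi : ∑ᶠ a : ℤ, ((QChar.SS d w i (fun j b => ((v j b : ℕ) : ℤ)) i a : ℝ))
      = W + (∑ j' ∈ Finset.univ.erase i, (QChar.cnat d i j' : ℝ) * F j') - F i := by
    have h1 : ∀ a : ℤ, ((QChar.SS d w i (fun j b => ((v j b : ℕ) : ℤ)) i a : ℝ))
        = ((w i (a + QChar.dl d i) : ℝ)
            + ∑ j' ∈ Finset.univ.erase i, ∑ k ∈ Finset.range (QChar.cnat d i j'),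
                ((v j' (a + (d i j' + ((k : ℤ) + 1) * d i i)) : ℝ)))
            - ((v i (a + d i i) : ℝ)) := by
      intro a
      simp only [QChar.SS, if_pos rfl, add_assoc]
      push_cast
      ring
    rw [finsum_congr h1]
    have hs1 : (Function.support fun a : ℤ => ((w i (a + QChar.dl d i) : ℝ))).Finite :=
      aux_shift_fin hwf _
    have hs3 : (Function.support fun a : ℤ => ((v i (a + d i i) : ℝ))).Finite :=
      aux_shift_fin (hvf i) _
    have hs2i : ∀ j' ∈ Finset.univ.erase i, ∀ k ∈ Finset.range (QChar.cnat d i j'),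
        (Function.support fun a : ℤ =>
          ((v j' (a + (d i j' + ((k : ℤ) + 1) * d i i)) : ℝ))).Finite := by
      intro j' _ k _
      exact aux_shift_fin (hvf j') _
    have hs2j : ∀ j' ∈ Finset.univ.erase i,
        (Function.support fun a : ℤ =>
          ∑ k ∈ Finset.range (QChar.cnat d i j'),
            ((v j' (a + (d i j' + ((k : ℤ) + 1) * d i i)) : ℝ))).Finite := by
      intro j' hj'
      refine Set.Finite.subset ?_ (Finset.support_sum _ _)
      exact Set.Finite.biUnion (Finset.range _).finite_toSet (hs2i j' hj')
    have hs2 : (Function.support fun a : ℤ =>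
        ∑ j' ∈ Finset.univ.erase i, ∑ k ∈ Finset.range (QChar.cnat d i j'),
          ((v j' (a + (d i j' + ((k : ℤ) + 1) * d i i)) : ℝ))).Finite := by
      refine Set.Finite.subset ?_ (Finset.support_sum _ _)
      exact Set.Finite.biUnion (Finset.univ.erase i).finite_toSet hs2j
    rw [finsum_sub_distrib ((hs1.union hs2).subset (Function.support_add _ _)) hs3,
      finsum_add_distrib hs1 hs2]
    rw [aux_shift_finsum (fun a => ((w i a : ℝ))) (QChar.dl d i),
      aux_shift_finsum (fun a => ((v i a : ℝ))) (d i i)]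
    rw [finsum_sum_comm _ _ hs2j]
    congr 1
    congr 1
    refine Finset.sum_congr rfl fun j' hj' => ?_
    rw [finsum_sum_comm _ _ (hs2i j' hj')]
    have : ∀ k ∈ Finset.range (QChar.cnat d i j'),
        (∑ᶠ a : ℤ, ((v j' (a + (d i j' + ((k : ℤ) + 1) * d i i)) : ℝ))) = F j' :=
      fun k _ => aux_shift_finsum (fun a => ((v j' a : ℝ))) _
    rw [Finset.sum_congr rfl this, Finset.sum_const, nsmul_eq_mul, Finset.card_range]
  -- finsums away from i
  have hSj : ∀ j, j ≠ i → ∑ᶠ a : ℤ, ((QChar.SS d w i (fun j b => ((v j b : ℕ) : ℤ)) j a : ℝ))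
      = F j := by
    intro j hj
    simp [QChar.SS, hj, hFdef]
  unfold QChar.pairθ
  simp only [Int.cast_natCast]
  rw [← Finset.sum_erase_add _ _ (Finset.mem_univ i),
    ← Finset.sum_erase_add (f := fun j => (QChar.dl d j : ℝ) * θ j * ∑ᶠ a : ℤ, ((v j a : ℝ)))
      _ (Finset.mem_univ i)]
  have hL : ∀ j ∈ Finset.univ.erase i,
      (QChar.dl d j : ℝ) * QChar.sref d i θ j
          * (∑ᶠ a : ℤ, ((QChar.SS d w i (fun j b => ((v j b : ℕ) : ℤ)) j a : ℝ)))
        = (QChar.dl d j : ℝ) * (θ j - (QChar.cc d j i : ℝ) * θ i) * F j := by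
    intro j hj
    rw [hSj j (Finset.ne_of_mem_erase hj)]
    rfl
  rw [Finset.sum_congr rfl hL, hSi]
  have hsrefi : QChar.sref d i θ i = -θ i := by
    simp [QChar.sref, hccii]; ring
  rw [hsrefi]
  have hexp : (QChar.dl d i : ℝ) * (-θ i)
      * (W + (∑ j' ∈ Finset.univ.erase i, (QChar.cnat d i j' : ℝ) * F j') - F i)
      = (∑ j' ∈ Finset.univ.erase i,
          (QChar.dl d i : ℝ) * (-θ i) * ((QChar.cnat d i j' : ℝ) * F j'))
        + (QChar.dl d i : ℝ) * (-θ i) * (W - F i) := by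
    rw [← Finset.mul_sum]
    ring
  rw [hexp, ← add_assoc, ← Finset.sum_add_distrib]
  have hmain : ∀ j ∈ Finset.univ.erase i,
      (QChar.dl d j : ℝ) * (θ j - (QChar.cc d j i : ℝ) * θ i) * F j
        + (QChar.dl d i : ℝ) * (-θ i) * ((QChar.cnat d i j : ℝ) * F j)
      = (QChar.dl d j : ℝ) * θ j * F j := by
    intro j hj
    have hj' : j ≠ i := Finset.ne_of_mem_erase hj
    have h3 : ((QChar.cnat d i j : ℝ)) = -((QChar.cc d i j : ℝ)) := by
      have := hcnat j hj'
      push_cast at this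
      exact this
    have h1 := key j i
    have h2 := key i j
    have h4 : ((d j i : ℤ) : ℝ) = ((d i j : ℤ) : ℝ) := by
      exact_mod_cast congrArg (Int.cast : ℤ → ℝ) (hd.symm j i)
    rw [h3]
    linear_combination θ i * F j * (h2 - h1 - h4)
  rw [Finset.sum_congr rfl hmain]
  ring
end

section
/- Fix k ∈ I and let w ∈ ℕ^{I×ℤ} be the tuple with w_k^0 = 1 and all other entries 0. Suppose given complex vector spaces V_i^a of dimension v_i^a (i ∈ I, a ∈ ℤ) with linear maps x_{j,i}^a : V_i^a → V_j^{a−d_{ij}} and a vector ξ ∈ V_k^{d_k}, such that: (N1) relation (R1) holds; (N2) for all i and a, Σ_{j≠i} Σ_{ℓ=0}^{−c_{ij}−1} x_{i,i}^{(−c_{ij}−ℓ−1),a−ℓd_{ii}−2d_{ij}} ∘ x_{i,j}^{a−ℓd_{ii}−d_{ij}} ∘ x_{j,i}^{a−ℓd_{ii}} ∘ x_{i,i}^{(ℓ),a} = 0; (N3) x_{k,k}^{d_k}(ξ) = 0; and (N4) the only collection of subspaces U_i^a ⊆ V_i^a with x_{j,i}^a(U_i^a) ⊆ U_j^{a−d_{ij}}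 for all i,j,a and ξ ∈ U_k^{d_k} is U_i^a = V_i^a for all i,a. Then, setting W_k^0 := ℂ with A_k^0(1) := ξ, setting all other spaces W_i^a := 0, and setting all maps B_i^a := 0, one obtains a θ-stable point of P_{v,w} for every θ = (θ_i) ∈ ℝ^I with θ_i < 0 for all i ∈ I. -/
/- Common setup: (graded, generalized) quiver varieties attached to a symmetrized
Cartan matrix, following Neguț, "Extremal monomials of q-characters". -/

open Module LinearMap Finset

open QChar in
/-- from data `(V, x, ξ)` satisfying (N1)-(N4) (the quiver Grassmannian-type
data of Hernandez-Leclerc, for the highest weight `Y_{k,c}`), setting `W_k^0 = ℂ`,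
`A_k^0(1) = ξ`, all other `W_i^a = 0` and `B = 0` produces a `θ`-stable point of
`P_{v,w}` for every `θ` with all `θ_i < 0`. -/
theorem extremal_qchar_stmt15 {I : Type} [Fintype I] [DecidableEq I]
    (d : I → I → ℤ) (v w : I → ℤ → ℕ) (k : I)
    (Vt : I → Type) [∀ i, AddCommGroup (Vt i)] [∀ i, Module ℂ (Vt i)]
    (Wt : I → Type) [∀ i, AddCommGroup (Wt i)] [∀ i, Module ℂ (Wt i)]
    (Vg : ∀ i : I, ℤ → Submodule ℂ (Vt i)) (Wg : ∀ i : I, ℤ → Submodule ℂ (Wt i))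
    (x : ∀ j i : I, Vt i →ₗ[ℂ] Vt j) (A : ∀ i : I, Wt i →ₗ[ℂ] Vt i)
    (B : ∀ i : I, Vt i →ₗ[ℂ] Wt i)
    (hd : QChar.CartanData d)
    (hv : (Function.support fun p : I × ℤ => v p.1 p.2).Finite)
    (hwdef : ∀ j a, w j a = if j = k ∧ a = 0 then 1 else 0)
    -- the spaces V_i^a, of dimensions v_i^a, with the maps x
    (hVfin : ∀ i, FiniteDimensional ℂ (Vt i))
    (hVint : ∀ i, DirectSum.IsInternal (Vg i))
    (hVdim : ∀ i a, Module.finrank ℂ (Vg i a) = v i a)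
    (hxg : ∀ j i a, (Vg i a).map (x j i) ≤ Vg j (a - d i j))
    -- the vector ξ ∈ V_k^{d_k}
    (ξ : Vt k) (hξ : ξ ∈ Vg k (QChar.dl d k))
    -- (N1): relation (R1)
    (hN1 : ∀ i j : I, i ≠ j →
      QChar.lpow (x j j) (QChar.cnat d j i) ∘ₗ x j i
        + x j i ∘ₗ QChar.lpow (x i i) (QChar.cnat d i j) = 0)
    -- (N2): relation (R2) without the (A ∘ B)-term
    (hN2 : ∀ i : I, (∑ j ∈ Finset.univ.erase i, ∑ ℓ ∈ Finset.range (QChar.cnat d i j),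
      QChar.lpow (x i i) (QChar.cnat d i j - 1 - ℓ) ∘ₗ x i j ∘ₗ x j i
        ∘ₗ QChar.lpow (x i i) ℓ) = 0)
    -- (N3): x_{k,k}^{d_k}(ξ) = 0
    (hN3 : x k k ξ = 0)
    -- (N4): stability of (V, x, ξ)
    (hN4 : ∀ U : ∀ j : I, ℤ → Submodule ℂ (Vt j), QChar.IsSubrep d Vt Vg x U →
      ξ ∈ U k (QChar.dl d k) → ∀ j a, U j a = Vg j a)
    -- the W-side data: W_k^0 = ℂ with A_k^0(1) = ξ, all other W_i^a = 0, B = 0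
    (hWfin : ∀ i, FiniteDimensional ℂ (Wt i))
    (hWint : ∀ i, DirectSum.IsInternal (Wg i))
    (hWdim : ∀ i a, Module.finrank ℂ (Wg i a) = w i a)
    (e : Wt k ≃ₗ[ℂ] ℂ) (hAk : ∀ u : Wt k, A k u = e u • ξ)
    (hAj : ∀ j : I, j ≠ k → A j = 0)
    (hB : ∀ i, B i = 0) :
    QChar.IsRep d v w Vt Wt Vg Wg x A B ∧
      ∀ θ : I → ℝ, (∀ i, θ i < 0) → QChar.IsStable d v Vt Wt Vg Wg x A B θ := by
  have hdlpos : ∀ i, 0 < QChar.dl d i := by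
    intro i
    obtain ⟨m, hm⟩ := hd.even i
    have hp := hd.pos i
    unfold QChar.dl
    omega
  -- Wg k a = ⊥ for a ≠ 0, and Wg j a = ⊥ for j ≠ k
  have hWbot : ∀ j a, ¬(j = k ∧ a = 0) → Wg j a = ⊥ := by
    intro j a h
    haveI := hWfin j
    have h0 : Module.finrank ℂ (Wg j a) = 0 := by
      rw [hWdim, hwdef, if_neg h]
    exact Submodule.finrank_eq_zero.mp h0
  have hWtop : Wg k 0 = ⊤ := by
    haveI := hWfin k
    apply Submodule.eq_top_of_finrank_eq
    rw [hWdim, hwdef, if_pos ⟨rfl, rfl⟩]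
    rw [e.finrank_eq, Module.finrank_self]
  have hAmap : ∀ i a, (Wg i a).map (A i) ≤ Vg i (a + QChar.dl d i) := by
    intro i a
    by_cases hik : i = k
    · subst hik
      by_cases ha : a = 0
      · subst ha
        rintro y ⟨u, -, rfl⟩
        rw [hAk]
        rw [zero_add]
        exact Submodule.smul_mem _ _ hξ
      · rw [hWbot i a (by tauto), Submodule.map_bot]
        exact bot_le
    · rw [hAj i hik, Submodule.map_zero]
      exact bot_le
  have hAB : ∀ i, A i ∘ₗ B i = 0 := by
    intro i; rw [hB]; exact LinearMap.comp_zero _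
  have hrep : QChar.IsRep d v w Vt Wt Vg Wg x A B := by
    refine ⟨hVfin, hWfin, hVint, hWint, hVdim, hWdim, hxg, hAmap, ?_, hN1, ?_, ?_, ?_⟩
    · intro i a
      rw [hB, Submodule.map_zero]
      exact bot_le
    · intro i
      rw [hN2 i, hAB, zero_add]
    · intro i
      by_cases hik : i = k
      · subst hik
        ext u
        simp only [LinearMap.comp_apply, LinearMap.zero_apply, hAk, map_smul, hN3, smul_zero]
      · rw [hAj i hik, LinearMap.comp_zero]
    · intro i
      rw [hB, LinearMap.zero_comp]
  refine ⟨hrep, ?_⟩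
  intro θ hθ
  constructor
  · intro U hU _
    unfold QChar.pairθ
    apply Finset.sum_nonpos
    intro i _
    apply mul_nonpos_of_nonpos_of_nonneg
    · apply mul_nonpos_of_nonneg_of_nonpos
      · exact_mod_cast (hdlpos i).le
      · exact (hθ i).le
    · apply finsum_nonneg
      intro a
      unfold QChar.dimv
      positivity
  · intro U hU hA'
    have hξU : ξ ∈ U k (QChar.dl d k) := by
      have hu : A k (e.symm 1) ∈ (Wg k 0).map (A k) :=
        Submodule.mem_map_of_mem (by rw [hWtop]; trivial)
      have := hA' k 0 hu
      rw [hAk, e.apply_symm_apply, one_smul] at this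
      rwa [zero_add] at this
    have hUeq := hN4 U hU hξU
    have : (fun (i : I) (a : ℤ) => (v i a : ℤ) - QChar.dimv Vt U i a) = fun _ _ => 0 := by
      funext i a
      unfold QChar.dimv
      rw [hUeq, hVdim]
      ring
    rw [this]
    unfold QChar.pairθ
    apply le_of_eq
    symm
    apply Finset.sum_eq_zero
    intro i _
    simp
end
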